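/- arXiv:2208.12434 — 10 statements merged into one kernel-verified Lean document; each statement's English description precedes it below -/
import Mathlib

section
/- Let K be the attractor of an IFS {f_i}_{i=1}^m on ℂ with f_i(z) = a_i z + b_i, a_i, b_i ∈ ℂ, 0 < |a_i| < 1, and suppose K is not a singleton. If an eventually periodic word i₁…i_l(j₁…j_k)^∞ ∈ {1,…,m}^ℕ is a coding of an extreme point of the convex hull of K, then the product a_{j₁}a_{j₂}⋯a_{j_k} is a positive real number. -/
/-!
Let `P` be the product of the slopes along one period and `F n = f_{w 0} ∘ ⋯ ∘ f_{w (n-1)}`.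
Conjugating the composition along one period by `F l` gives an affine map `Φ` of slope `P`
with `Φⁿ ∘ F l = F (l + n k)`; it fixes the coded point `z`, because `Φ` maps the nested images
`F (l + n k) '' K` forward. Hence `K` contains the orbit `z + Pⁿ v` for some `v ≠ 0`.
If `P` were not a positive real, some power `Q = Pʲ` would have `re Q ≤ 0`; then `0` is a convex
combination of `1, Q, Q²` with weights `normSq Q, -2 re Q, 1`, so `z` is a convex combination of
the points `z + v, z + Q v, z + Q² v` of `K`, all different from `z`, and is not extreme.
-/

open Real Set

theorem exists_nat_cos_mul_nonpos {α : ℝ} (h0 : 0 < α) (hπ : α ≤ π) :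
    ∃ j : ℕ, cos (j * α) ≤ 0 := by
  -- the first multiple of `α` beyond `π / 2` overshoots it by less than `α ≤ π`
  set j := ⌈π / (2 * α)⌉₊
  have hj : π / (2 * α) ≤ j := Nat.le_ceil _
  have hj' : (j : ℝ) < π / (2 * α) + 1 := Nat.ceil_lt_add_one (by positivity)
  have hπα : π / (2 * α) * α = π / 2 := by field_simp
  refine ⟨j, cos_nonpos_of_pi_div_two_le_of_le ?_ ?_⟩
  · nlinarith
  · nlinarith

theorem Complex.re_pow_eq (P : ℂ) (j : ℕ) : (P ^ j).re = ‖P‖ ^ j * Real.cos (j * P.arg) := by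
  conv_lhs => rw [← Complex.norm_mul_cos_add_sin_mul_I P]
  rw [mul_pow, ← Complex.ofReal_pow, Complex.cos_add_sin_mul_I_pow, Complex.re_ofReal_mul,
    ← Complex.ofReal_natCast, ← Complex.ofReal_mul, Complex.add_re, Complex.cos_ofReal_re,
    Complex.mul_I_re, Complex.sin_ofReal_im, neg_zero, add_zero]

theorem Complex.exists_pow_re_nonpos {P : ℂ} (hP : P ≠ 0) (h : ¬ ∃ r : ℝ, 0 < r ∧ P = r) :
    ∃ j : ℕ, (P ^ j).re ≤ 0 := by
  have harg : 0 < |P.arg| := by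
    refine abs_pos.2 fun h0 => h ⟨P.re, ?_, ?_⟩
    · obtain ⟨hre, him⟩ := Complex.arg_eq_zero_iff.1 h0
      exact hre.lt_of_ne fun hre0 => hP (Complex.ext hre0.symm him)
    · exact Complex.ext rfl (Complex.arg_eq_zero_iff.1 h0).2
  obtain ⟨j, hcos⟩ := exists_nat_cos_mul_nonpos harg (Complex.abs_arg_le_pi P)
  refine ⟨j, ?_⟩
  rw [Complex.re_pow_eq, ← Real.cos_abs, abs_mul, Nat.abs_cast]
  exact mul_nonpos_of_nonneg_of_nonpos (by positivity) hcos

theorem Complex.zero_mem_convexHull_one_self_sq {Q : ℂ} (hQ : Q.re ≤ 0) :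
    (0 : ℂ) ∈ convexHull ℝ {1, Q, Q ^ 2} := by
  set t : Fin 3 → ℝ := ![Complex.normSq Q, -2 * Q.re, 1]
  have ht : ∀ i ∈ Finset.univ, 0 ≤ t i := fun i _ => by
    fin_cases i <;> simp [t, Complex.normSq_nonneg, (by linarith : 2 * Q.re ≤ 0)]
  have h := Finset.univ.centerMass_mem_convexHull (s := {1, Q, Q ^ 2}) ht
    (Finset.sum_pos' ht ⟨2, by simp [t]⟩) (z := ![1, Q, Q ^ 2]) (fun i _ => by fin_cases i <;> simp)
  -- `Q` is a root of `(X - Q) * (X - conj Q) = X ^ 2 - 2 * Q.re * X + normSq Q`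
  have hzero : ∑ i, t i • ![1, Q, Q ^ 2] i = 0 := by
    simp only [t, Fin.sum_univ_three, Complex.real_smul]
    push_cast [Complex.normSq_eq_conj_mul_self, Complex.re_eq_add_conj]
    ring
  rwa [Finset.centerMass, hzero, smul_zero] at h

theorem Complex.notMem_extremePoints_convexHull {K : Set ℂ} {z v Q : ℂ} (hv : v ≠ 0) (hQ : Q ≠ 0)
    (hre : Q.re ≤ 0) (h₀ : z + v ∈ K) (h₁ : z + Q * v ∈ K) (h₂ : z + Q ^ 2 * v ∈ K) :
    z ∉ extremePoints ℝ (convexHull ℝ K) := by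
  rw [(convex_convexHull ℝ K).mem_extremePoints_iff_mem_sdiff_convexHull_sdiff]
  rintro ⟨-, hz⟩
  let L : ℂ →ᵃ[ℝ] ℂ := (LinearMap.mulRight ℝ v).toAffineMap + AffineMap.const ℝ ℂ z
  have h := mem_image_of_mem L (zero_mem_convexHull_one_self_sq hre)
  rw [AffineMap.image_convexHull] at h
  refine hz (convexHull_mono ?_ (by simpa [L] using h))
  have hK := subset_convexHull ℝ K
  simp [insert_subset_iff, hK h₀, hK h₁, hK h₂, hv, hQ, add_comm]

theorem Complex.exists_pos_real_of_add_pow_mul_mem {K : Set ℂ} {z v P : ℂ} (hv : v ≠ 0) (hP : P ≠ 0)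
    (horb : ∀ n : ℕ, z + P ^ n * v ∈ K) (hext : z ∈ extremePoints ℝ (convexHull ℝ K)) :
    ∃ r : ℝ, 0 < r ∧ P = r := by
  by_contra h
  obtain ⟨j, hj⟩ := exists_pow_re_nonpos hP h
  refine notMem_extremePoints_convexHull hv (pow_ne_zero j hP) hj ?_ (horb j) ?_ hext
  · simpa using horb 0
  · simpa [← pow_mul] using horb (j * 2)

def wordComp {ι α : Type*} (f : ι → α → α) (w : ℕ → ι) : ℕ → α → α
  | 0 => id
  | n + 1 => wordComp f w n ∘ f (w n)

section wordComp

variable {ι α : Type*} (f : ι → α → α) (w : ℕ → ι)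

theorem wordComp_unique {F : ℕ → α → α} (h₀ : F 0 = id) (hs : ∀ n, F (n + 1) = F n ∘ f (w n)) :
    F = wordComp f w := by
  funext n
  induction n with
  | zero => exact h₀
  | succ n ih => rw [hs, ih, wordComp]

theorem wordComp_add (m n : ℕ) :
    wordComp f w (m + n) = wordComp f w m ∘ wordComp f (fun i => w (m + i)) n := by
  induction n with
  | zero => rfl
  | succ n ih => rw [← add_assoc, wordComp, ih, wordComp, Function.comp_assoc]

theorem wordComp_add_mul_of_periodic {l k : ℕ} (hper : ∀ n, l ≤ n → w (n + k) = w n) (n : ℕ) :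
    wordComp f w (l + n * k) = wordComp f w l ∘ (wordComp f (fun i => w (l + i)) k)^[n] := by
  have hshift : ∀ n i, w (l + n * k + i) = w (l + i) := by
    intro n
    induction n with
    | zero => simp
    | succ n ih =>
      intro i
      rw [← ih, show l + (n + 1) * k + i = l + n * k + i + k by ring, hper _ (by omega)]
  induction n with
  | zero => simp
  | succ n ih =>
    rw [add_mul, one_mul, ← add_assoc, wordComp_add, ih, Function.iterate_succ, Function.comp_assoc]
    simp only [hshift]

theorem antitone_image_wordComp {K : Set α} (hK : ∀ i, MapsTo (f i) K K) :
    Antitone fun n => wordComp f w n '' K := by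
  refine antitone_nat_of_succ_le fun n => ?_
  rw [wordComp, image_comp]
  exact image_mono (hK _).image_subset

variable {R : Type*} [CommRing R] {f : ι → R → R} {a : ι → R}

theorem wordComp_sub (hf : ∀ i x y, f i x - f i y = a i * (x - y)) (n : ℕ) (x y : R) :
    wordComp f w n x - wordComp f w n y = (∏ i ∈ Finset.range n, a (w i)) * (x - y) := by
  induction n generalizing x y with
  | zero => simp [wordComp]
  | succ n ih =>
    rw [wordComp, Function.comp_apply, Function.comp_apply, ih, hf, Finset.prod_range_succ]
    ring

theorem wordComp_injective [IsDomain R] (hf : ∀ i x y, f i x - f i y = a i * (x - y))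
    (ha : ∀ i, a i ≠ 0) (n : ℕ) : Function.Injective (wordComp f w n) := fun x y hxy => by
  have h := wordComp_sub w hf n x y
  rw [hxy, sub_self, eq_comm, mul_eq_zero, sub_eq_zero] at h
  exact h.resolve_left (Finset.prod_ne_zero_iff.2 fun i _ => ha _)

end wordComp

section Slope

variable {R : Type*} [CommRing R]

theorem semiconj_of_sub_eq_mul {g h : R → R} {c d : R} (hg : ∀ x y, g x - g y = c * (x - y))
    (hh : ∀ x y, h x - h y = d * (x - y)) :
    Function.Semiconj g h (fun x => g (h 0) + d * (x - g 0)) := fun x => by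
  linear_combination hg (h x) (h 0) + c * hh x 0 - d * hg x 0

theorem iterate_eq_of_sub_eq_mul {g : R → R} {c z : R} (hg : ∀ x y, g x - g y = c * (x - y))
    (hz : g z = z) (n : ℕ) (x : R) : g^[n] x = z + c ^ n * (x - z) := by
  induction n with
  | zero => simp
  | succ n ih =>
    rw [Function.iterate_succ_apply', ih]
    linear_combination hg (z + c ^ n * (x - z)) z + hz

end Slope

theorem add_pow_mul_mem_of_eventually_periodic {ι R : Type*} [CommRing R] {f : ι → R → R}
    {a : ι → R} (hf : ∀ i x y, f i x - f i y = a i * (x - y)) {K : Set R}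
    (hK : ∀ i, MapsTo (f i) K K) {w : ℕ → ι} {l k : ℕ} (hk : 0 < k)
    (hper : ∀ n, l ≤ n → w (n + k) = w n) {z : R} (hz : ⋂ n : ℕ, wordComp f w (n + 1) '' K = {z})
    {x : R} (hx : x ∈ K) (n : ℕ) :
    z + (∏ i ∈ Finset.range k, a (w (l + i))) ^ n * (wordComp f w l x - z) ∈ K := by
  set P := ∏ i ∈ Finset.range k, a (w (l + i))
  have hanti := antitone_image_wordComp f w hK
  -- `Φ` is the affine map that `wordComp f w l` conjugates to the composition along one period
  set Φ : R → R := fun y => wordComp f w l (wordComp f (fun i => w (l + i)) k 0) +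
    P * (y - wordComp f w l 0)
  have hΦ : ∀ n y, Φ^[n] (wordComp f w l y) = wordComp f w (l + n * k) y := fun n y => by
    rw [wordComp_add_mul_of_periodic f w hper, Function.comp_apply,
      ((semiconj_of_sub_eq_mul (wordComp_sub w hf l) (wordComp_sub _ hf k)).iterate_right n y)]
  have hΦz : Φ z = z := by
    have hzF : ∀ n, z ∈ wordComp f w n '' K := fun n =>
      hanti n.le_succ (mem_iInter.1 (hz.ge rfl) n)
    suffices Φ z ∈ ⋂ n : ℕ, wordComp f w (n + 1) '' K by rwa [hz] at this
    refine mem_iInter.2 fun n => ?_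
    obtain ⟨y, hy, rfl⟩ := hzF (l + n * k)
    rw [← hΦ, ← Function.iterate_succ_apply' Φ, hΦ]
    exact hanti (by nlinarith) (mem_image_of_mem _ hy)
  rw [← iterate_eq_of_sub_eq_mul (fun x y => by simp only [Φ]; ring) hΦz n, hΦ]
  simpa [wordComp] using hanti (Nat.zero_le _) (mem_image_of_mem (wordComp f w (l + n * k)) hx)

theorem stmt3_general (m : ℕ) (a b : Fin m → ℂ)
    (ha : ∀ i, 0 < ‖a i‖ ∧ ‖a i‖ < 1)
    (f : Fin m → ℂ → ℂ) (hf : ∀ i z, f i z = a i * z + b i)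
    (K : Set ℂ)
    (hK : K = ⋃ i, f i '' K)
    (hns : ∃ x ∈ K, ∃ y ∈ K, x ≠ y)
    -- an eventually periodic word w = i₁…i_l (j₁…j_k)^∞
    (w : ℕ → Fin m) (l k : ℕ) (hk : 0 < k)
    (hper : ∀ n, l ≤ n → w (n + k) = w n)
    -- F n is the composition f_{w 0} ∘ f_{w 1} ∘ ⋯ ∘ f_{w (n-1)}
    (F : ℕ → ℂ → ℂ) (hF0 : F 0 = id) (hFs : ∀ n, F (n + 1) = F n ∘ f (w n))
    -- w is a coding of the point z
    (z : ℂ) (hz : (⋂ n : ℕ, F (n + 1) '' K) = {z})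
    -- z is an extreme point of the convex hull of K
    (hext : z ∈ Set.extremePoints ℝ (convexHull ℝ K)) :
    ∃ r : ℝ, 0 < r ∧ (∏ i ∈ Finset.range k, a (w (l + i))) = (r : ℂ) := by
  obtain rfl : F = wordComp f w := wordComp_unique f w hF0 hFs
  have hslope : ∀ i x y, f i x - f i y = a i * (x - y) := fun i x y => by rw [hf, hf]; ring
  have ha₀ : ∀ i, a i ≠ 0 := fun i => norm_pos_iff.1 (ha i).1
  have hmaps : ∀ i, MapsTo (f i) K K := fun i x hx => by
    rw [hK]; exact mem_iUnion.2 ⟨i, mem_image_of_mem _ hx⟩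
  obtain ⟨x, hx, hxz⟩ : ∃ x ∈ K, wordComp f w l x ≠ z := by
    obtain ⟨x, hx, y, hy, hxy⟩ := hns
    by_contra! h
    exact hxy (wordComp_injective w hslope ha₀ l ((h x hx).trans (h y hy).symm))
  exact Complex.exists_pos_real_of_add_pow_mul_mem (sub_ne_zero.2 hxz)
    (Finset.prod_ne_zero_iff.2 fun i _ => ha₀ _)
    (add_pow_mul_mem_of_eventually_periodic hslope hmaps hk hper hz hx) hext

theorem stmt3 (m : ℕ) (hm : 0 < m) (a b : Fin m → ℂ)
    (ha : ∀ i, 0 < ‖a i‖ ∧ ‖a i‖ < 1)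
    (f : Fin m → ℂ → ℂ) (hf : ∀ i z, f i z = a i * z + b i)
    (K : Set ℂ) (hKne : K.Nonempty) (hKc : IsCompact K)
    (hK : K = ⋃ i, f i '' K)
    (hns : ∃ x ∈ K, ∃ y ∈ K, x ≠ y)
    -- an eventually periodic word w = i₁…i_l (j₁…j_k)^∞
    (w : ℕ → Fin m) (l k : ℕ) (hk : 0 < k)
    (hper : ∀ n, l ≤ n → w (n + k) = w n)
    -- F n is the composition f_{w 0} ∘ f_{w 1} ∘ ⋯ ∘ f_{w (n-1)}
    (F : ℕ → ℂ → ℂ) (hF0 : F 0 = id) (hFs : ∀ n, F (n + 1) = F n ∘ f (w n))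
    -- w is a coding of the point z
    (z : ℂ) (hz : (⋂ n : ℕ, F (n + 1) '' K) = {z})
    -- z is an extreme point of the convex hull of K
    (hext : z ∈ Set.extremePoints ℝ (convexHull ℝ K)) :
    ∃ r : ℝ, 0 < r ∧ (∏ i ∈ Finset.range k, a (w (l + i))) = (r : ℂ) :=
  stmt3_general m a b ha f hf K hK hns w l k hk hper F hF0 hFs z hz hext
end

section
/- Let 0 < η < π/3, a = e^{-iη}/(2cos η), c = 1/(1-|a|⁴), z_k = c a^{k+1}, w_k = 1 - c|a|²a^k, b₀ = a + c|a|⁴, and V = {b₀} ∪ {z_k : k ≥ 0} ∪ {w_k : k ≥ 1}. Then the convex hull co(V) is a polygon; more precisely, there exists n such that co(V) = co({b₀, z₀,…,z_n, w₁,…,w_n}). -/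
/-!
The points of `V` other than `b₀` are the images of the powers `a ^ k`, `k ≥ 1`, under the
real-affine maps `x ↦ c x` and `x ↦ 1 - c ‖a‖² x`, so it suffices that finitely many powers of `a`
have all the others in their convex hull. This holds whenever `‖a‖ < 1` and `a` is not real.
Some power `b = a ^ p` has `re b ≤ 0`, and then `‖b‖² - 2 re b · b + b² = 0` puts `0` in the hull
of `1, b, b²`, hence in that of `a, a ^ (p + 1), a ^ (2p + 1)`. Some power `a ^ m`, `m ≥ 2`, has
argument in `[0, arg a]` and modulus so small that it lies in the triangle `0, 1, a`; multiplying
by `a ^ j`, the power `a ^ (j + m)` lies in the triangle `0, a ^ j, a ^ (j + 1)`, and strong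
induction on the exponent finishes.
-/

open Real Set ComplexConjugate

theorem smul_add_smul_add_smul_mem_convexHull {𝕜 E : Type*} [Field 𝕜] [LinearOrder 𝕜]
    [IsStrictOrderedRing 𝕜] [AddCommGroup E] [Module 𝕜 E] {x y z : E} {p q t : 𝕜}
    (hp : 0 ≤ p) (hq : 0 ≤ q) (ht : 0 ≤ t) (hpqt : p + q + t = 1) :
    p • x + q • y + t • z ∈ convexHull 𝕜 {x, y, z} := by
  have := (convex_convexHull 𝕜 {x, y, z}).sum_mem (t := Finset.univ) (w := ![p, q, t])
    (z := ![x, y, z]) (by intro i _; fin_cases i <;> assumption)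
    (by simp [Fin.sum_univ_three, hpqt])
    (by intro i _; fin_cases i <;> apply subset_convexHull <;> simp)
  simpa [Fin.sum_univ_three, add_assoc] using this

theorem add_mul_mem_convexHull_image {A : Type*} [Ring A] [Algebra ℝ A] {s : Set A} {x : A}
    (hx : x ∈ convexHull ℝ s) (u v : A) :
    u + v * x ∈ convexHull ℝ ((fun y => u + v * y) '' s) := by
  let f : A →ᵃ[ℝ] A := AffineMap.const ℝ A u + (LinearMap.mulLeft ℝ v).toAffineMap
  have hf : ⇑f = fun y => u + v * y := by ext y; simp [f]
  rw [← hf, ← f.image_convexHull]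
  exact ⟨x, hx, by simp [hf]⟩

theorem Convex.pow_mem_of_pow_mem_convexHull_zero_one_self {A : Type*} [Ring A] [Algebra ℝ A]
    {a : A} {C : Set A} (hC : Convex ℝ C) (h0 : 0 ∈ C) {m n : ℕ} (hm : 2 ≤ m) (hmn : m ≤ n)
    (ham : a ^ m ∈ convexHull ℝ {0, 1, a}) (hpow : ∀ j, 1 ≤ j → j ≤ n → a ^ j ∈ C) :
    ∀ k, 1 ≤ k → a ^ k ∈ C := by
  intro k
  induction k using Nat.strong_induction_on with
  | _ k ih =>
  intro hk
  rcases le_or_gt k n with hkn | hnk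
  · exact hpow k hk hkn
  obtain ⟨j, rfl⟩ : ∃ j, k = j + m := ⟨k - m, by omega⟩
  have hj : a ^ j ∈ C := ih j (by omega) (by omega)
  have hj1 : a ^ (j + 1) ∈ C := ih (j + 1) (by omega) (by omega)
  have h := add_mul_mem_convexHull_image ham 0 (a ^ j)
  rw [pow_add]
  simp only [zero_add] at h
  refine convexHull_min ?_ hC h
  rintro _ ⟨y, hy, rfl⟩
  rcases hy with rfl | rfl | rfl
  · simpa using h0
  · simpa using hj
  · simpa [pow_succ] using hj1

theorem Complex.zero_mem_convexHull_one_self_sq_s4 {b : ℂ} (hb : b.re ≤ 0) :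
    (0 : ℂ) ∈ convexHull ℝ {1, b, b ^ 2} := by
  have hroot : (normSq b : ℂ) - 2 * b.re * b + b ^ 2 = 0 := by
    apply Complex.ext <;> simp [sq, Complex.normSq_apply] <;> ring
  have hS : 0 < normSq b - 2 * b.re + 1 := by have := normSq_nonneg b; linarith
  have hS' : ((normSq b - 2 * b.re + 1 : ℝ) : ℂ) ≠ 0 := by exact_mod_cast hS.ne'
  convert smul_add_smul_add_smul_mem_convexHull (x := (1 : ℂ)) (y := b) (z := b ^ 2)
    (div_nonneg (normSq_nonneg b) hS.le) (div_nonneg (by linarith : 0 ≤ -2 * b.re) hS.le)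
    (div_nonneg zero_le_one hS.le) (by field_simp; ring) using 1
  simp only [Complex.real_smul, mul_one, Complex.ofReal_div]
  field_simp
  push_cast
  linear_combination -hroot

theorem exists_nat_mul_mem_Ico {θ : ℝ} (hθ : 0 < θ) {x : ℝ} (hx : 0 ≤ x) :
    ∃ m : ℕ, m * θ ∈ Ico x (x + θ) := by
  refine ⟨⌈x / θ⌉₊, (div_le_iff₀ hθ).1 (Nat.le_ceil _), ?_⟩
  have := Nat.ceil_lt_add_one (div_nonneg hx hθ.le)
  rwa [← lt_div_iff₀ hθ, add_div, div_self hθ.ne']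

theorem Complex.ofReal_mul_exp_mul_I_pow (r θ : ℝ) (n : ℕ) :
    ((r : ℂ) * Complex.exp (θ * Complex.I)) ^ n =
      ((r ^ n : ℝ) : ℂ) * Complex.exp ((n * θ : ℝ) * Complex.I) := by
  rw [mul_pow, ← Complex.exp_nat_mul]
  push_cast
  ring_nf

theorem Complex.sin_mul_exp_mul_I (θ φ : ℝ) :
    (Real.sin θ : ℂ) * Complex.exp (φ * Complex.I) =
      Real.sin (θ - φ) + Real.sin φ * Complex.exp (θ * Complex.I) := by
  apply Complex.ext <;>
    simp [Complex.exp_ofReal_mul_I_re, Complex.exp_ofReal_mul_I_im, Real.sin_sub,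
      Complex.sin_ofReal_re, Complex.cos_ofReal_re] <;> ring

theorem Complex.ofReal_mul_exp_mem_convexHull_zero_one {r θ ρ φ : ℝ} (hr : 0 < r) (hθ0 : 0 < θ)
    (hθπ : θ < π) (hρ : 0 ≤ ρ) (hφ0 : 0 ≤ φ) (hφθ : φ ≤ θ) (hρr : ρ * (1 + r) ≤ r * Real.sin θ) :
    (ρ : ℂ) * Complex.exp (φ * Complex.I) ∈
      convexHull ℝ {0, 1, (r : ℂ) * Complex.exp (θ * Complex.I)} := by
  have hs : 0 < Real.sin θ := Real.sin_pos_of_pos_of_lt_pi hθ0 hθπ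
  set α := ρ * Real.sin (θ - φ) / Real.sin θ
  set β := ρ * Real.sin φ / (r * Real.sin θ)
  have hα : 0 ≤ α := div_nonneg (mul_nonneg hρ
    (Real.sin_nonneg_of_nonneg_of_le_pi (by linarith) (by linarith))) hs.le
  have hβ : 0 ≤ β := div_nonneg (mul_nonneg hρ
    (Real.sin_nonneg_of_nonneg_of_le_pi hφ0 (by linarith))) (by positivity)
  have hαβ : α + β ≤ 1 := by
    have hα' : α ≤ ρ / Real.sin θ :=
      div_le_div_of_nonneg_right (mul_le_of_le_one_right hρ (Real.sin_le_one _)) hs.le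
    have hβ' : β ≤ ρ / (r * Real.sin θ) :=
      div_le_div_of_nonneg_right (mul_le_of_le_one_right hρ (Real.sin_le_one _)) (by positivity)
    have : ρ / Real.sin θ + ρ / (r * Real.sin θ) ≤ 1 := by
      rw [div_add_div _ _ hs.ne' (by positivity), div_le_one (by positivity)]
      nlinarith
    linarith
  convert smul_add_smul_add_smul_mem_convexHull (x := (0 : ℂ)) (y := 1)
    (z := (r : ℂ) * Complex.exp (θ * Complex.I)) (by linarith : 0 ≤ 1 - α - β) hα hβ (by ring)
    using 1
  have hs' : ((Real.sin θ : ℝ) : ℂ) ≠ 0 := by exact_mod_cast hs.ne'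
  have hr' : (r : ℂ) ≠ 0 := by exact_mod_cast hr.ne'
  simp only [smul_zero, zero_add, Complex.real_smul, mul_one, α, β, Complex.ofReal_div,
    Complex.ofReal_mul]
  field_simp
  rw [mul_comm Complex.I]
  linear_combination (ρ : ℂ) * Complex.sin_mul_exp_mul_I θ φ

theorem Complex.exists_re_pow_nonpos {r θ : ℝ} (hr : 0 ≤ r) (hθ0 : 0 < θ) (hθπ : θ < π) :
    ∃ p, 1 ≤ p ∧ (((r : ℂ) * exp (θ * I)) ^ p).re ≤ 0 := by
  obtain ⟨p, hp1, hp2⟩ := exists_nat_mul_mem_Ico hθ0 (by positivity : (0 : ℝ) ≤ π / 2)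
  refine ⟨p, Nat.pos_of_ne_zero ?_, ?_⟩
  · rintro rfl
    simp only [CharP.cast_eq_zero, zero_mul] at hp1
    linarith [pi_pos]
  · rw [ofReal_mul_exp_mul_I_pow, re_ofReal_mul, exp_ofReal_mul_I_re]
    exact mul_nonpos_of_nonneg_of_nonpos (pow_nonneg hr p)
      (Real.cos_nonpos_of_pi_div_two_le_of_le hp1 (by linarith))

theorem Complex.exists_pow_mem_convexHull_zero_one_self {r θ : ℝ} (hr0 : 0 < r) (hr1 : r < 1)
    (hθ0 : 0 < θ) (hθπ : θ < π) :
    ∃ m, 2 ≤ m ∧ ((r : ℂ) * exp (θ * I)) ^ m ∈ convexHull ℝ {0, 1, (r : ℂ) * exp (θ * I)} := by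
  have hs : 0 < Real.sin θ := Real.sin_pos_of_pos_of_lt_pi hθ0 hθπ
  obtain ⟨N, hN⟩ := exists_pow_lt_of_lt_one (by positivity : 0 < r * Real.sin θ / (1 + r)) hr1
  obtain ⟨m, hm1, hm2⟩ :=
    exists_nat_mul_mem_Ico hθ0 (by positivity : (0 : ℝ) ≤ (N + 1 : ℕ) * (2 * π))
  have hmN : (2 * (N + 1) : ℕ) < m := by
    have : ((2 * (N + 1) : ℕ) : ℝ) * θ < m * θ := by push_cast at hm1 ⊢; nlinarith
    exact_mod_cast lt_of_mul_lt_mul_right this hθ0.le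
  refine ⟨m, by omega, ?_⟩
  have hper := exp_mul_I_periodic.sub_nat_mul_eq (x := ((m * θ : ℝ) : ℂ)) (N + 1)
  rw [ofReal_mul_exp_mul_I_pow, ← hper]
  have hrm : r ^ m ≤ r ^ N := pow_le_pow_of_le_one hr0.le hr1.le (by omega)
  have := ofReal_mul_exp_mem_convexHull_zero_one (ρ := r ^ m)
    (φ := m * θ - (N + 1 : ℕ) * (2 * π)) hr0 hθ0 hθπ (by positivity) (by linarith)
    (by linarith) (by rw [lt_div_iff₀ (by positivity)] at hN; nlinarith)
  push_cast at this ⊢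
  exact this

theorem Complex.exists_pow_mem_convexHull_of_im_pos {a : ℂ} (ha : ‖a‖ < 1) (him : 0 < a.im) :
    ∃ n, ∀ k, 1 ≤ k → a ^ k ∈ convexHull ℝ ((a ^ ·) '' Icc 1 n) := by
  have hpolar : (‖a‖ : ℂ) * exp (arg a * I) = a := norm_mul_exp_arg_mul_I a
  have harg0 : 0 < arg a :=
    (arg_nonneg_iff.2 him.le).lt_of_ne fun h => him.ne' (arg_eq_zero_iff.1 h.symm).2
  have hargπ : arg a < π := arg_lt_pi_iff.2 (Or.inr him.ne')
  have hnorm : 0 < ‖a‖ := norm_pos_iff.2 fun h => by simp [h] at him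
  obtain ⟨p, hp, hre⟩ := exists_re_pow_nonpos (norm_nonneg a) harg0 hargπ
  obtain ⟨m, hm, htri⟩ := exists_pow_mem_convexHull_zero_one_self hnorm ha harg0 hargπ
  rw [hpolar] at hre htri
  refine ⟨max m (2 * p + 1),
    (convex_convexHull ℝ _).pow_mem_of_pow_mem_convexHull_zero_one_self ?_ hm (le_max_left _ _)
      htri fun j hj1 hj2 => subset_convexHull ℝ _ ⟨j, ⟨hj1, hj2⟩, rfl⟩⟩
  have h0 := add_mul_mem_convexHull_image (zero_mem_convexHull_one_self_sq_s4 hre) 0 a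
  simp only [zero_add, mul_zero] at h0
  refine convexHull_mono ?_ h0
  rintro _ ⟨y, hy, rfl⟩
  rcases hy with rfl | rfl | rfl
  · exact ⟨1, ⟨le_rfl, by omega⟩, by simp⟩
  · exact ⟨p + 1, ⟨by omega, by omega⟩, by ring⟩
  · exact ⟨2 * p + 1, ⟨by omega, by omega⟩, by ring⟩

theorem Complex.exists_pow_mem_convexHull {a : ℂ} (ha : ‖a‖ < 1) (him : a.im ≠ 0) :
    ∃ n, ∀ k, 1 ≤ k → a ^ k ∈ convexHull ℝ ((a ^ ·) '' Icc 1 n) := by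
  rcases him.lt_or_gt with hneg | hpos
  · obtain ⟨n, hn⟩ :=
      exists_pow_mem_convexHull_of_im_pos (a := conj a) (by simpa using ha) (by simpa using hneg)
    refine ⟨n, fun k hk => ?_⟩
    have h := Set.mem_image_of_mem conjAe.toLinearMap (hn k hk)
    rw [LinearMap.image_convexHull, Set.image_image] at h
    simpa using h
  · exact exists_pow_mem_convexHull_of_im_pos ha hpos

theorem norm_exp_neg_mul_I_div_two_cos_lt_one {η : ℝ} (hη0 : 0 ≤ η) (hη1 : η < π / 3) :
    ‖Complex.exp (-(η : ℂ) * Complex.I) / (2 * Real.cos η)‖ < 1 := by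
  have hcos : 1 / 2 < Real.cos η := by
    have := Real.cos_lt_cos_of_nonneg_of_le_pi hη0 (by linarith [pi_pos]) hη1
    rwa [Real.cos_pi_div_three] at this
  rw [← Complex.ofReal_neg, ← Complex.ofReal_ofNat, ← Complex.ofReal_mul, norm_div,
    Complex.norm_exp_ofReal_mul_I, Complex.norm_real, Real.norm_of_nonneg (by linarith),
    div_lt_one (by linarith)]
  linarith

theorem im_exp_neg_mul_I_div_two_cos_ne_zero {η : ℝ} (hη0 : 0 < η) (hη1 : η < π / 2) :
    (Complex.exp (-(η : ℂ) * Complex.I) / (2 * Real.cos η)).im ≠ 0 := by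
  have hcos : 0 < Real.cos η := Real.cos_pos_of_mem_Ioo ⟨by linarith, hη1⟩
  have hsin : 0 < Real.sin η := Real.sin_pos_of_pos_of_lt_pi hη0 (by linarith)
  rw [← Complex.ofReal_neg, ← Complex.ofReal_ofNat, ← Complex.ofReal_mul, Complex.div_ofReal_im,
    Complex.exp_ofReal_mul_I_im, Real.sin_neg]
  exact div_ne_zero (by linarith) (by linarith)

theorem stmt4_general (η : ℝ) (hη0 : 0 < η) (hη1 : η < π / 3)
    (a : ℂ) (ha : a = Complex.exp (-(η : ℂ) * Complex.I) / (2 * Real.cos η))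
    (c : ℝ)
    (z w : ℕ → ℂ) (hz : ∀ k, z k = (c : ℂ) * a ^ (k + 1))
    (hw : ∀ k, w k = 1 - (c : ℂ) * (‖a‖ : ℂ) ^ 2 * a ^ k)
    (b₀ : ℂ)
    (V : Set ℂ) (hV : V = {b₀} ∪ (z '' Set.univ) ∪ (w '' {k | 1 ≤ k})) :
    ∃ n : ℕ, convexHull ℝ V =
      convexHull ℝ ({b₀} ∪ (z '' {k | k ≤ n}) ∪ (w '' {k | 1 ≤ k ∧ k ≤ n})) := by
  obtain ⟨n, hn⟩ := Complex.exists_pow_mem_convexHull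
    (ha ▸ norm_exp_neg_mul_I_div_two_cos_lt_one hη0.le hη1)
    (ha ▸ im_exp_neg_mul_I_div_two_cos_ne_zero hη0 (by linarith [pi_pos]))
  subst hV
  refine ⟨n, (convexHull_min ?_ (convex_convexHull ℝ _)).antisymm (convexHull_mono ?_)⟩
  · rintro x ((rfl | ⟨k, -, rfl⟩) | ⟨k, hk, rfl⟩)
    · exact subset_convexHull ℝ _ (Or.inl (Or.inl rfl))
    · rw [hz, ← zero_add ((c : ℂ) * _)]
      refine convexHull_mono ?_ (add_mul_mem_convexHull_image (hn (k + 1) (by omega)) 0 _)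
      rintro _ ⟨_, ⟨j, ⟨hj1, hjn⟩, rfl⟩, rfl⟩
      exact Or.inl (Or.inr ⟨j - 1, show j - 1 ≤ n by omega,
        by simp [hz, Nat.sub_add_cancel hj1]⟩)
    · rw [show w k = 1 + -((c : ℂ) * (‖a‖ : ℂ) ^ 2) * a ^ k by rw [hw]; ring]
      refine convexHull_mono ?_ (add_mul_mem_convexHull_image (hn k hk) 1 _)
      rintro _ ⟨_, ⟨j, hj, rfl⟩, rfl⟩
      exact Or.inr ⟨j, hj, by rw [hw]; ring⟩
  · rintro x ((rfl | ⟨k, -, rfl⟩) | ⟨k, hk, rfl⟩)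
    · exact Or.inl (Or.inl rfl)
    · exact Or.inl (Or.inr ⟨k, trivial, rfl⟩)
    · exact Or.inr ⟨k, hk.1, rfl⟩

theorem stmt4 (η : ℝ) (hη0 : 0 < η) (hη1 : η < π / 3)
    (a : ℂ) (ha : a = Complex.exp (-(η : ℂ) * Complex.I) / (2 * Real.cos η))
    (c : ℝ) (hc : c = 1 / (1 - ‖a‖ ^ 4))
    (z w : ℕ → ℂ) (hz : ∀ k, z k = (c : ℂ) * a ^ (k + 1))
    (hw : ∀ k, w k = 1 - (c : ℂ) * (‖a‖ : ℂ) ^ 2 * a ^ k)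
    (b₀ : ℂ) (hb₀ : b₀ = a + (c : ℂ) * (‖a‖ : ℂ) ^ 4)
    (V : Set ℂ) (hV : V = {b₀} ∪ (z '' Set.univ) ∪ (w '' {k | 1 ≤ k})) :
    ∃ n : ℕ, convexHull ℝ V =
      convexHull ℝ ({b₀} ∪ (z '' {k | k ≤ n}) ∪ (w '' {k | 1 ≤ k ∧ k ≤ n})) :=
  stmt4_general η hη0 hη1 a ha c z w hz hw b₀ V hV
end

section
/- Let 0 < η < π/3 and a = e^{-iη}/(2cos η), c = 1/(1-|a|⁴), and suppose w₀ := 1 - c|a|² < 0. Then w₀ lies in the closed triangle with vertices 0, z₂ = c·a³, and z₃ = c·a⁴, and also in the closed triangle with vertices 0, conj(z₂), conj(z₃). In particular the segment from z₂ to z₃ meets the real axis at the point -c|a|⁴. -/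
open Real Set ComplexConjugate

/-!
Since `Re a = 1/2`, the number `a` is a root of `X² - X + |a|²`, and reducing `a⁴` and `a³` modulo
this quadratic gives `(2|a|² - 1) a³ + (1 - |a|²) a⁴ = -|a|⁶`. The hypothesis `w₀ < 0` forces
`1/2 ≤ |a|² ≤ 1`, so the weights `(2|a|² - 1)/|a|²` and `(1 - |a|²)/|a|²` exhibit `-c|a|⁴` as a
point of the segment `[z₂, z₃]`, and the real number `w₀` lies between `0` and `-c|a|⁴`. The
conjugate triangle is handled by conjugating, as `w₀` and `-c|a|⁴` are real.
-/

theorem mem_convexHull_triple_of_mem_segment {𝕜 E : Type*} [Field 𝕜] [LinearOrder 𝕜]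
    [IsStrictOrderedRing 𝕜] [AddCommGroup E] [Module 𝕜 E] {x y z p w : E}
    (hp : p ∈ segment 𝕜 y z) (hw : w ∈ segment 𝕜 x p) : w ∈ convexHull 𝕜 {x, y, z} := by
  rw [convexHull_insert (insert_nonempty _ _), convexHull_pair, convexJoin_singleton_left]
  exact mem_iUnion₂.2 ⟨p, hp, hw⟩

theorem Complex.conj_mem_segment {p y z : ℂ} (h : p ∈ segment ℝ y z) :
    conj p ∈ segment ℝ (conj y) (conj z) := by
  have := mem_image_of_mem Complex.conjAe.toLinearMap.toAffineMap h
  rwa [image_segment] at this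

theorem Complex.sq_eq_self_sub_norm_sq {a : ℂ} (ha : a.re = 1 / 2) : a ^ 2 = a - (‖a‖ : ℂ) ^ 2 := by
  have h1 := Complex.add_conj a
  have h2 := Complex.mul_conj' a
  rw [ha] at h1
  push_cast at h1
  linear_combination a * h1 - h2

theorem Complex.re_exp_neg_mul_I_div_two_cos {η : ℝ} (h : Real.cos η ≠ 0) :
    (Complex.exp (-(η : ℂ) * Complex.I) / (2 * Real.cos η)).re = 1 / 2 := by
  rw [show (2 * Real.cos η : ℂ) = ((2 * Real.cos η : ℝ) : ℂ) by push_cast; ring,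
    Complex.div_ofReal_re, ← Complex.ofReal_neg, Complex.exp_ofReal_mul_I_re, Real.cos_neg]
  field_simp

theorem neg_norm_pow_four_mem_segment {a : ℂ} (ha : a.re = 1 / 2) (c : ℝ)
    (h₁ : 1 / 2 ≤ ‖a‖ ^ 2) (h₂ : ‖a‖ ^ 2 ≤ 1) :
    -(c : ℂ) * (‖a‖ : ℂ) ^ 4 ∈ segment ℝ (c * a ^ 3) (c * a ^ 4) := by
  have hr : ‖a‖ ≠ 0 := by rintro h; norm_num [h] at h₁
  have hr' : (‖a‖ : ℂ) ≠ 0 := by exact_mod_cast hr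
  refine ⟨(2 * ‖a‖ ^ 2 - 1) / ‖a‖ ^ 2, (1 - ‖a‖ ^ 2) / ‖a‖ ^ 2,
    div_nonneg (by linarith) (by positivity),
    div_nonneg (by linarith) (by positivity), by field_simp; ring, ?_⟩
  have key := Complex.sq_eq_self_sub_norm_sq ha
  simp only [Complex.real_smul]
  push_cast
  field_simp
  linear_combination (c : ℂ) * ((1 - (‖a‖ : ℂ) ^ 2) * a ^ 2 + (‖a‖ : ℂ) ^ 2 * a + (‖a‖ : ℂ) ^ 4) * key

theorem Complex.ofReal_mem_segment_zero {x y : ℝ} (hyx : y ≤ x) (hx : x ≤ 0) :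
    (x : ℂ) ∈ segment ℝ 0 (y : ℂ) := by
  have : x ∈ segment ℝ 0 y := by
    rw [segment_eq_uIcc]; exact ⟨by simp [hyx], by simp [hx]⟩
  have := mem_image_of_mem Complex.ofRealCLM.toLinearMap.toAffineMap this
  rwa [image_segment] at this

theorem sq_bounds_of_one_lt_mul_sq {r c : ℝ} (hc : c = 1 / (1 - r ^ 4)) (h : 1 < c * r ^ 2) :
    1 / 2 ≤ r ^ 2 ∧ r ^ 2 ≤ 1 ∧ -(c * r ^ 4) ≤ 1 - c * r ^ 2 := by
  have hc0 : 0 < c := by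
    by_contra! hc0; nlinarith [sq_nonneg r]
  have hc1 : c * (1 - r ^ 4) = 1 := by
    rw [hc] at hc0 ⊢; field_simp [(one_div_pos.mp hc0).ne']
  have hr : r ^ 2 ≤ 1 := by nlinarith [sq_nonneg r]
  refine ⟨?_, hr, by nlinarith⟩
  by_contra! hr'
  nlinarith [sq_nonneg r]

theorem stmt5_general (η : ℝ)
    (a : ℂ) (ha : a = Complex.exp (-(η : ℂ) * Complex.I) / (2 * Real.cos η))
    (c : ℝ) (hc : c = 1 / (1 - ‖a‖ ^ 4))
    (z : ℕ → ℂ) (hz : ∀ k, z k = (c : ℂ) * a ^ (k + 1))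
    (w₀ : ℂ) (hw₀ : w₀ = 1 - (c : ℂ) * (‖a‖ : ℂ) ^ 2)
    (hneg : w₀.re < 0) :
    w₀ ∈ convexHull ℝ ({0, z 2, z 3} : Set ℂ) ∧
    w₀ ∈ convexHull ℝ ({0, (starRingEnd ℂ) (z 2), (starRingEnd ℂ) (z 3)} : Set ℂ) ∧
    (-(c : ℂ) * (‖a‖ : ℂ) ^ 4) ∈ segment ℝ (z 2) (z 3) := by
  replace hw₀ : w₀ = ((1 - c * ‖a‖ ^ 2 : ℝ) : ℂ) := by rw [hw₀]; push_cast; ring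
  replace hneg : 1 < c * ‖a‖ ^ 2 := by rw [hw₀, Complex.ofReal_re] at hneg; linarith
  obtain ⟨h₁, h₂, h₃⟩ := sq_bounds_of_one_lt_mul_sq hc hneg
  have hcos : Real.cos η ≠ 0 := by
    rintro h; norm_num [ha, h] at h₁
  have hp : -(c : ℂ) * (‖a‖ : ℂ) ^ 4 ∈ segment ℝ (z 2) (z 3) := by
    rw [hz, hz]
    exact neg_norm_pow_four_mem_segment (ha ▸ Complex.re_exp_neg_mul_I_div_two_cos hcos) c h₁ h₂
  have hp_real : -(c : ℂ) * (‖a‖ : ℂ) ^ 4 = ((-(c * ‖a‖ ^ 4) : ℝ) : ℂ) := by push_cast; ring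
  have hw : w₀ ∈ segment ℝ 0 (-(c : ℂ) * (‖a‖ : ℂ) ^ 4) := by
    rw [hw₀, hp_real]; exact Complex.ofReal_mem_segment_zero h₃ (by linarith)
  have hp_conj := Complex.conj_mem_segment hp
  rw [hp_real, Complex.conj_ofReal, ← hp_real] at hp_conj
  exact ⟨mem_convexHull_triple_of_mem_segment hp hw,
    mem_convexHull_triple_of_mem_segment hp_conj hw, hp⟩

theorem stmt5 (η : ℝ) (hη0 : 0 < η) (hη1 : η < π / 3)
    (a : ℂ) (ha : a = Complex.exp (-(η : ℂ) * Complex.I) / (2 * Real.cos η))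
    (c : ℝ) (hc : c = 1 / (1 - ‖a‖ ^ 4))
    (z : ℕ → ℂ) (hz : ∀ k, z k = (c : ℂ) * a ^ (k + 1))
    (w₀ : ℂ) (hw₀ : w₀ = 1 - (c : ℂ) * (‖a‖ : ℂ) ^ 2)
    (hneg : w₀.re < 0) :
    w₀ ∈ convexHull ℝ ({0, z 2, z 3} : Set ℂ) ∧
    w₀ ∈ convexHull ℝ ({0, (starRingEnd ℂ) (z 2), (starRingEnd ℂ) (z 3)} : Set ℂ) ∧
    (-(c : ℂ) * (‖a‖ : ℂ) ^ 4) ∈ segment ℝ (z 2) (z 3) :=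
  stmt5_general η a ha c hc z hz w₀ hw₀ hneg
end

section
/- Let 0 < η < π/3, a = e^{-iη}/(2cos η). For each k ≥ 1, define Φ_k(η) = (1-|a|⁴)sin((k-1)η) - |a|³sin((k-2)η) + |a|^k sin η. Then there is a positive constant C (depending on η, k) such that Im((conj(z_{k-1}) - conj(z_k))·(w₁ - z_k)) = C·Φ_k(η), where z_k = c a^{k+1}, w₁ = 1 - c|a|²a, c = 1/(1-|a|⁴). -/
open Real Set

/-! Since `2‖a‖ cos η = 1`, the real part of `a` is `1/2`, so `1 - conj a = a` and the first factor
collapses to `c conj(a)^k a`. Writing `a = r e^{-iη}` and expanding gives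
`Im = c r^(k+1) (sin((k-1)η) - c r³ sin((k-2)η) + c r^(k+1) sin 2η)`, and the relations
`r sin 2η = sin η`, `c (1 - r⁴) = 1` turn this into `c² r^(k+1) Φ_k(η)`. -/

open ComplexConjugate

lemma conj_mul_pow_sub_conj_mul_pow_succ {a : ℂ} (ha : a + conj a = 1) (c : ℝ) (k : ℕ) :
    conj ((c : ℂ) * a ^ k) - conj ((c : ℂ) * a ^ (k + 1)) = c * (conj a ^ k * a) := by
  simp only [map_mul, map_pow, Complex.conj_ofReal]
  linear_combination (-(c : ℂ) * conj a ^ k) * ha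

lemma im_conj_pow_mul_of_eq_ofReal_mul_exp {a : ℂ} {r η : ℝ}
    (ha : a = r * Complex.exp (-η * Complex.I)) (c : ℝ) (k : ℕ) :
    (conj a ^ k * a * (1 - c * r ^ 2 * a - c * a ^ (k + 1))).im =
      r ^ (k + 1) * (Real.sin ((k - 1) * η) - c * r ^ 3 * Real.sin ((k - 2) * η)
        + c * r ^ (k + 1) * Real.sin (2 * η)) := by
  set u := Complex.exp (η * Complex.I)
  set v := Complex.exp (-η * Complex.I)
  have huv : u * v = 1 := by rw [← Complex.exp_add]; simp
  have hconj : conj a = r * u := by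
    rw [ha, map_mul, Complex.conj_ofReal, ← Complex.exp_conj]; simp [u]
  have hexp (m n : ℕ) : u ^ m * v ^ n = Complex.exp (((m - n : ℝ) * η : ℝ) * Complex.I) := by
    simp only [u, v, ← Complex.exp_nat_mul, ← Complex.exp_add]
    congr 1; push_cast; ring
  have hpolar : conj a ^ k * a * (1 - c * r ^ 2 * a - c * a ^ (k + 1)) =
      ((r ^ (k + 1) : ℝ) : ℂ) * (u ^ k * v ^ 1 - ((c * r ^ 3 : ℝ) : ℂ) * (u ^ k * v ^ 2)
        - ((c * r ^ (k + 1) : ℝ) : ℂ) * (u ^ 0 * v ^ 2)) := by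
    have hk : (u * v) ^ k = 1 := by rw [huv, one_pow]
    rw [hconj, ha]
    push_cast
    linear_combination (-c * r ^ (2 * k + 2) * v ^ 2 : ℂ) * hk
  rw [hpolar]
  simp only [hexp, Complex.im_ofReal_mul, Complex.sub_im, Complex.exp_ofReal_mul_I_im,
    Nat.cast_zero, Nat.cast_one, Nat.cast_ofNat, zero_sub, neg_mul, Real.sin_neg]
  ring

lemma half_lt_cos_of_pos_of_lt_pi_div_three {η : ℝ} (h0 : 0 < η) (h1 : η < π / 3) :
    1 / 2 < Real.cos η := by
  rw [← Real.cos_pi_div_three]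
  exact Real.cos_lt_cos_of_nonneg_of_le_pi h0.le (by linarith [Real.pi_pos]) h1

theorem stmt9 (η : ℝ) (hη0 : 0 < η) (hη1 : η < π / 3)
    (a : ℂ) (ha : a = Complex.exp (-(η : ℂ) * Complex.I) / (2 * Real.cos η))
    (c : ℝ) (hc : c = 1 / (1 - ‖a‖ ^ 4))
    (z : ℕ → ℂ) (hz : ∀ k, z k = (c : ℂ) * a ^ (k + 1))
    (w₁ : ℂ) (hw₁ : w₁ = 1 - (c : ℂ) * (‖a‖ : ℂ) ^ 2 * a) :
    ∀ k : ℕ, 1 ≤ k → ∃ C : ℝ, 0 < C ∧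
      (((starRingEnd ℂ) (z (k - 1)) - (starRingEnd ℂ) (z k)) * (w₁ - z k)).im =
        C * ((1 - ‖a‖ ^ 4) * Real.sin (((k : ℝ) - 1) * η)
          - ‖a‖ ^ 3 * Real.sin (((k : ℝ) - 2) * η)
          + ‖a‖ ^ k * Real.sin η) := by
  intro k hk
  have hcos := half_lt_cos_of_pos_of_lt_pi_div_three hη0 hη1
  set r := (2 * Real.cos η)⁻¹ with hr
  have hpolar : a = r * Complex.exp (-η * Complex.I) := by
    rw [ha, hr]; push_cast; ring
  have hnorm : ‖a‖ = r := by
    rw [hpolar, norm_mul, Complex.norm_real, Real.norm_eq_abs, abs_of_pos (by positivity),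
      ← Complex.ofReal_neg, Complex.norm_exp_ofReal_mul_I, mul_one]
  have hrcos : 2 * r * Real.cos η = 1 := by rw [hr]; field_simp
  have hr0 : 0 < r := by positivity
  have hr1 : r < 1 := by nlinarith
  have hre : a + conj a = 1 := by
    rw [Complex.add_conj, hpolar, Complex.re_ofReal_mul, ← Complex.ofReal_neg,
      Complex.exp_ofReal_mul_I_re, Real.cos_neg, ← mul_assoc, hrcos, Complex.ofReal_one]
  have hr4 : 0 < 1 - r ^ 4 := by nlinarith [pow_lt_one₀ hr0.le hr1 (by norm_num : 4 ≠ 0)]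
  have hc0 : 0 < c := by rw [hc, hnorm]; positivity
  have hc1 : c * (1 - r ^ 4) = 1 := by rw [hc, hnorm]; field_simp
  refine ⟨c ^ 2 * r ^ (k + 1), by positivity, ?_⟩
  clear_value r
  rw [hz, hz, Nat.sub_add_cancel hk, hw₁, hnorm, conj_mul_pow_sub_conj_mul_pow_succ hre,
    mul_assoc, Complex.im_ofReal_mul, im_conj_pow_mul_of_eq_ofReal_mul_exp hpolar,
    Real.sin_two_mul]
  linear_combination (-c * r ^ (k + 1) * Real.sin ((k - 1) * η)) * hc1
    + (c ^ 2 * r ^ (2 * k + 1) * Real.sin η) * hrcos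
end

section
/- Let a(η) = e^{-iη}/(2cos η) and Φ₄(η) = (1-|a|⁴)sin 3η - |a|³ sin 2η + |a|⁴ sin η for η ∈ (0,π/3). Then Φ₄(η) has the same sign as 1 - 2|a(η)|⁴, and Φ₄ has a unique zero in the interval (π/4, π/3). -/
/-!
With `a = 1/(2 cos η)` one has `Φ₄(η) = sin η · (4 cos² η - 1) · (1 - 2 a⁴)`, and the prefactor is
positive on `(0, π/3)`. Hence `Φ₄` vanishes exactly where `cos⁴ η = 1/8`; since `cos⁴` decreases
from `1/4` to `1/16` on `[π/4, π/3]`, this happens at exactly one point there.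
-/

open Real Set

/-- The identity also holds where `cos η = 0`, thanks to the junk value `1 / 0 = 0`. -/
theorem phi_four_eq_mul_one_sub_two_mul_pow_four (η : ℝ) :
    (1 - (1 / (2 * cos η)) ^ 4) * sin (3 * η) - (1 / (2 * cos η)) ^ 3 * sin (2 * η)
      + (1 / (2 * cos η)) ^ 4 * sin η
      = sin η * (4 * cos η ^ 2 - 1) * (1 - 2 * (1 / (2 * cos η)) ^ 4) := by
  have hsin_cube : sin η ^ 3 = sin η * (1 - cos η ^ 2) := by
    linear_combination sin η * sin_sq η
  rw [sin_three_mul, sin_two_mul, hsin_cube]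
  by_cases hc : cos η = 0
  · simp only [hc]
    ring
  · field_simp
    ring

theorem sin_mul_four_mul_cos_sq_sub_one_pos {η : ℝ} (h0 : 0 < η) (h1 : η < π / 3) :
    0 < sin η * (4 * cos η ^ 2 - 1) := by
  have hsin : 0 < sin η := sin_pos_of_pos_of_lt_pi h0 (by linarith [pi_pos])
  have hcos : 1 / 2 < cos η := by
    rw [← cos_pi_div_three]
    exact cos_lt_cos_of_nonneg_of_le_pi h0.le (by linarith [pi_pos]) h1
  have : 0 < 4 * cos η ^ 2 - 1 := by nlinarith
  positivity

theorem one_sub_two_mul_one_div_pow_four_eq_zero_iff (c : ℝ) :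
    1 - 2 * (1 / (2 * c)) ^ 4 = 0 ↔ c ^ 4 = 1 / 8 := by
  by_cases hc : c = 0
  · simp [hc]
  · field_simp
    constructor <;> intro h <;> linarith

theorem injOn_cos_pow_four : InjOn (fun η => cos η ^ 4) (Icc 0 (π / 2)) := by
  intro x hx y hy hxy
  have hcos_nonneg : ∀ z ∈ Icc 0 (π / 2), 0 ≤ cos z := fun z hz =>
    cos_nonneg_of_mem_Icc ⟨by linarith [hz.1, pi_pos], hz.2⟩
  have hcos : cos x = cos y :=
    (pow_left_inj₀ (hcos_nonneg x hx) (hcos_nonneg y hy) four_ne_zero).mp hxy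
  exact injOn_cos ⟨hx.1, by linarith [hx.2, pi_pos]⟩ ⟨hy.1, by linarith [hy.2, pi_pos]⟩ hcos

theorem existsUnique_mem_Ioo_cos_pow_four_eq :
    ∃! η, η ∈ Ioo (π / 4) (π / 3) ∧ cos η ^ 4 = 1 / 8 := by
  have hcont : ContinuousOn (fun η => cos η ^ 4) (Icc (π / 4) (π / 3)) := by fun_prop
  have hval : (1 / 8 : ℝ) ∈ Ioo (cos (π / 3) ^ 4) (cos (π / 4) ^ 4) := by
    have hsqrt : (√2 / 2) ^ 4 = (1 / 4 : ℝ) := by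
      rw [div_pow, show (√2) ^ 4 = ((√2) ^ 2) ^ 2 by ring, sq_sqrt zero_le_two]
      norm_num
    rw [cos_pi_div_three, cos_pi_div_four, hsqrt]
    norm_num
  obtain ⟨η₀, hmem, hη₀⟩ :=
    intermediate_value_Ioo' (by linarith [pi_pos]) hcont hval
  have hsub : Ioo (π / 4) (π / 3) ⊆ Icc 0 (π / 2) := fun z hz =>
    ⟨by linarith [hz.1, pi_pos], by linarith [hz.2, pi_pos]⟩
  exact ⟨η₀, ⟨hmem, hη₀⟩, fun η hη =>
    injOn_cos_pow_four (hsub hη.1) (hsub hmem) (hη.2.trans hη₀.symm)⟩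

theorem stmt10 (A Φ : ℝ → ℝ)
    (hA : ∀ η, A η = 1 / (2 * Real.cos η))
    (hΦ : ∀ η, Φ η = (1 - A η ^ 4) * Real.sin (3 * η)
      - A η ^ 3 * Real.sin (2 * η) + A η ^ 4 * Real.sin η) :
    (∀ η, 0 < η → η < π / 3 →
      ((0 < Φ η ↔ 0 < 1 - 2 * A η ^ 4) ∧ (Φ η = 0 ↔ 1 - 2 * A η ^ 4 = 0))) ∧
    (∃! η : ℝ, η ∈ Set.Ioo (π / 4) (π / 3) ∧ Φ η = 0) := by
  have hsign : ∀ η, 0 < η → η < π / 3 →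
      ((0 < Φ η ↔ 0 < 1 - 2 * A η ^ 4) ∧ (Φ η = 0 ↔ 1 - 2 * A η ^ 4 = 0)) := by
    intro η h0 h1
    have hk := sin_mul_four_mul_cos_sq_sub_one_pos h0 h1
    rw [hΦ, hA, phi_four_eq_mul_one_sub_two_mul_pow_four]
    exact ⟨mul_pos_iff_of_pos_left hk, mul_eq_zero_iff_left hk.ne'⟩
  have hzero : ∀ η ∈ Ioo (π / 4) (π / 3), Φ η = 0 ↔ cos η ^ 4 = 1 / 8 := fun η hη => by
    rw [(hsign η (by linarith [hη.1, pi_pos]) hη.2).2, hA,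
      one_sub_two_mul_one_div_pow_four_eq_zero_iff]
  obtain ⟨η₀, ⟨hmem, hη₀⟩, huniq⟩ := existsUnique_mem_Ioo_cos_pow_four_eq
  exact ⟨hsign, η₀, ⟨hmem, (hzero η₀ hmem).2 hη₀⟩,
    fun η ⟨hη, hΦη⟩ => huniq η ⟨hη, (hzero η hη).1 hΦη⟩⟩
end

section
/- For each integer k ≥ 4, the function Φ_k(η) = (1-|a(η)|⁴)sin((k-1)η) - |a(η)|³sin((k-2)η) + |a(η)|^k sin η, where |a(η)| = 1/(2cos η), has exactly one zero in the open interval (π/k, π/(k-1)). -/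
/-!
Write `a = 1 / (2 cos η)`. At `η = π/k`, `Φ_k = (1 - a² - a⁴ + a^k) sin(π/k) > 0`, since
`a² ≤ 1/2`; at `η = π/(k-1)`, `Φ_k = (a^k - a³) sin(π/(k-1))`, which is negative as soon as
`k ≥ 5` (then `a < 1`).
For `k ≥ 5`, `Φ_k` is strictly decreasing in between: in the form
`Φ_k = (1 - a² - a⁴) sin((k-1)η) + a³ sin(kη) + a^k sin η`, both `cos((k-1)η)` and `cos(kη)` lie
below `-cos η` on the interval, and as `η ≤ π/4` these two terms dominate the derivative.
For `k = 4` the function factors as `sin η (4cos²η - 1)(8cos⁴η - 1) / (8cos⁴η)`, whose only zero in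
`(π/4, π/3)` is where `cos⁴η = 1/8`.
-/

open Real Set

-- `|a(η)|` of the paper
noncomputable def ampl (η : ℝ) : ℝ := 1 / (2 * cos η)

noncomputable def Phi (k : ℕ) (η : ℝ) : ℝ :=
  (1 - ampl η ^ 4) * sin ((k - 1) * η) - ampl η ^ 3 * sin ((k - 2) * η) + ampl η ^ k * sin η

noncomputable def PhiDeriv (k : ℕ) (η : ℝ) : ℝ :=
  (k - 1) * (1 - ampl η ^ 2 - ampl η ^ 4) * cos ((k - 1) * η) + k * ampl η ^ 3 * cos (k * η)
    + ampl η ^ k * cos η - 4 * sin η * ampl η ^ 3 * (1 + 2 * ampl η ^ 2) * sin ((k - 1) * η)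
    + 6 * sin η * ampl η ^ 4 * sin (k * η) + 2 * k * sin η ^ 2 * ampl η ^ (k + 1)

lemma one_le_two_mul_cos_sq {η : ℝ} (h₀ : -(π / 4) ≤ η) (h₁ : η ≤ π / 4) :
    1 ≤ 2 * cos η ^ 2 := by
  have : 0 ≤ cos (2 * η) := cos_nonneg_of_mem_Icc ⟨by linarith, by linarith⟩
  linarith [cos_sq η]

lemma ampl_pos {η : ℝ} (h : 0 < cos η) : 0 < ampl η := by
  unfold ampl; positivity

lemma two_mul_ampl_mul_cos {η : ℝ} (h : cos η ≠ 0) : 2 * ampl η * cos η = 1 := by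
  unfold ampl; field_simp

lemma ampl_sq_le_half {η : ℝ} (h : 1 ≤ 2 * cos η ^ 2) : ampl η ^ 2 ≤ 1 / 2 := by
  rw [ampl, div_pow, one_pow, div_le_div_iff₀ (by nlinarith) two_pos]
  nlinarith

lemma Phi_eq_of_cos_ne_zero {k : ℕ} {η : ℝ} (h : cos η ≠ 0) :
    Phi k η = (1 - ampl η ^ 2 - ampl η ^ 4) * sin ((k - 1) * η) + ampl η ^ 3 * sin (k * η)
      + ampl η ^ k * sin η := by
  have hsub : sin ((k - 2) * η) = sin ((k - 1) * η) * cos η - cos ((k - 1) * η) * sin η := by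
    rw [← sin_sub]; ring_nf
  have hadd : sin (k * η) = sin ((k - 1) * η) * cos η + cos ((k - 1) * η) * sin η := by
    rw [← sin_add]; ring_nf
  rw [Phi, hsub, hadd]
  linear_combination (-(ampl η ^ 2) * sin ((k - 1) * η)) * two_mul_ampl_mul_cos h

lemma hasDerivAt_ampl {η : ℝ} (h : cos η ≠ 0) :
    HasDerivAt ampl (2 * sin η * ampl η ^ 2) η := by
  refine ((hasDerivAt_const η 1).div ((hasDerivAt_cos η).const_mul 2)
    (mul_ne_zero two_ne_zero h)).congr_deriv ?_
  rw [ampl]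
  field_simp
  ring

lemma hasDerivAt_sin_const_mul (m x : ℝ) :
    HasDerivAt (fun y => sin (m * y)) (m * cos (m * x)) x := by
  simpa [mul_comm] using ((hasDerivAt_id x).const_mul m).sin

lemma hasDerivAt_Phi {k : ℕ} {η : ℝ} (h : cos η ≠ 0) :
    HasDerivAt (Phi k) (PhiDeriv k η) η := by
  have ha := hasDerivAt_ampl h
  have hg : HasDerivAt (fun x => (1 - ampl x ^ 2 - ampl x ^ 4) * sin ((k - 1) * x)
      + ampl x ^ 3 * sin (k * x) + ampl x ^ k * sin x) (PhiDeriv k η) η := by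
    refine (((((hasDerivAt_const η 1).sub (ha.pow 2)).sub (ha.pow 4)).mul
      (hasDerivAt_sin_const_mul (k - 1) η)).add ((ha.pow 3).mul
      (hasDerivAt_sin_const_mul k η))).add ((ha.pow k).mul (hasDerivAt_sin η)) |>.congr_deriv ?_
    rcases k with _ | k
    · simp only [PhiDeriv, Pi.sub_apply, Pi.pow_apply]; push_cast; ring
    · simp only [PhiDeriv, Pi.sub_apply, Pi.pow_apply, add_tsub_cancel_right]; push_cast; ring
  exact hg.congr_of_eventuallyEq <| Filter.eventually_of_mem
    ((isOpen_ne_fun continuous_cos continuous_const).mem_nhds h)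
    fun _ hx => Phi_eq_of_cos_ne_zero hx

lemma cos_lt_neg_cos_of_abs_sub_pi_lt {x η : ℝ} (h : |x - π| < η) (hη : η ≤ π) :
    cos x < -cos η := by
  have := cos_lt_cos_of_nonneg_of_le_pi (abs_nonneg _) hη h
  rw [cos_abs, cos_sub_pi] at this
  linarith

lemma PhiDeriv_neg {k : ℕ} (hk : 5 ≤ k) {η : ℝ} (hη : η ∈ Ioo (π / k) (π / (k - 1))) :
    PhiDeriv k η < 0 := by
  obtain ⟨hl, hr⟩ := hη
  have hK : (5 : ℝ) ≤ k := by exact_mod_cast hk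
  have hkη : π < k * η := by rwa [div_lt_iff₀ (by linarith), mul_comm] at hl
  have hk1η : (k - 1) * η < π := by rwa [lt_div_iff₀ (by linarith), mul_comm] at hr
  have hη₀ : 0 < η := (div_pos pi_pos (by linarith)).trans hl
  have hη₁ : η ≤ π / 4 :=
    hr.le.trans (div_le_div_of_nonneg_left pi_pos.le (by norm_num) (by linarith))
  have hc : 0 < cos η := cos_pos_of_mem_Ioo ⟨by linarith, by linarith [pi_pos]⟩
  have hs : 0 < sin η := sin_pos_of_pos_of_lt_pi hη₀ (by linarith [pi_pos])
  have hc2 := one_le_two_mul_cos_sq (by linarith) hη₁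
  have hsc : sin η ^ 2 ≤ cos η ^ 2 := by nlinarith [sin_sq_add_cos_sq η]
  set a := ampl η
  have ha : 0 < a := ampl_pos hc
  have ha2 : a ^ 2 ≤ 1 / 2 := ampl_sq_le_half hc2
  have hac : 2 * a * cos η = 1 := two_mul_ampl_mul_cos hc.ne'
  have ha1 : a ≤ 1 := by nlinarith
  have hC₁ : cos ((k - 1) * η) < -cos η :=
    cos_lt_neg_cos_of_abs_sub_pi_lt (by rw [abs_sub_lt_iff]; constructor <;> linarith) (by linarith)
  have hC₂ : cos (k * η) < -cos η :=
    cos_lt_neg_cos_of_abs_sub_pi_lt (by rw [abs_sub_lt_iff]; constructor <;> linarith) (by linarith)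
  have hS₁ : 0 ≤ sin ((k - 1) * η) := sin_nonneg_of_nonneg_of_le_pi (by nlinarith) hk1η.le
  have hS₂ : sin (k * η) ≤ 0 := by
    have := sin_nonneg_of_nonneg_of_le_pi (x := k * η - π) (by linarith) (by linarith)
    rw [sin_sub_pi] at this
    linarith
  have hak : a ^ k ≤ 1 := pow_le_one₀ ha.le ha1
  have hak1 : a ^ (k + 1) ≤ a ^ 4 := pow_le_pow_of_le_one ha.le ha1 (by omega)
  have hmain : (k - 1) * (1 - a ^ 2 - a ^ 4) * cos ((k - 1) * η) < -cos η := by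
    have hq' : 1 / 4 ≤ 1 - a ^ 2 - a ^ 4 := by nlinarith
    have hq : 1 ≤ (k - 1) * (1 - a ^ 2 - a ^ 4) := by nlinarith
    nlinarith
  -- the `cos (k η)` term absorbs the growth of `a ^ k`, because `2 a sin² η ≤ cos η`
  have hsecond : k * a ^ 3 * cos (k * η) + 2 * k * sin η ^ 2 * a ^ (k + 1) ≤ 0 := by
    have h2as : 2 * a * sin η ^ 2 ≤ cos η := by nlinarith
    have : 2 * k * sin η ^ 2 * a ^ (k + 1) ≤ k * a ^ 3 * (2 * a * sin η ^ 2) := by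
      have := mul_le_mul_of_nonneg_left hak1 (by positivity : (0 : ℝ) ≤ 2 * k * sin η ^ 2)
      linarith
    have : k * a ^ 3 * (cos (k * η) + 2 * a * sin η ^ 2) ≤ 0 :=
      mul_nonpos_of_nonneg_of_nonpos (by positivity) (by linarith)
    linarith
  have hS₁term : 0 ≤ 4 * sin η * a ^ 3 * (1 + 2 * a ^ 2) * sin ((k - 1) * η) := by positivity
  have hS₂term : 6 * sin η * a ^ 4 * sin (k * η) ≤ 0 :=
    mul_nonpos_of_nonneg_of_nonpos (by positivity) hS₂
  have hcterm : a ^ k * cos η ≤ cos η := mul_le_of_le_one_left hc.le hak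
  simp only [PhiDeriv]
  linarith

lemma Phi_pi_div_pos {k : ℕ} (hk : 4 ≤ k) : 0 < Phi k (π / k) := by
  have hK : (4 : ℝ) ≤ k := by exact_mod_cast hk
  have hα₀ : 0 < π / k := div_pos pi_pos (by linarith)
  have hα₁ : π / k ≤ π / 4 := div_le_div_of_nonneg_left pi_pos.le (by norm_num) hK
  have hc : 0 < cos (π / k) := cos_pos_of_mem_Ioo ⟨by linarith, by linarith [pi_pos]⟩
  have hs : 0 < sin (π / k) := sin_pos_of_pos_of_lt_pi hα₀ (by linarith [pi_pos])
  have ha := ampl_pos hc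
  have ha2 := ampl_sq_le_half (one_le_two_mul_cos_sq (by linarith) hα₁)
  have h₁ : (k - 1) * (π / k) = π - π / k := by field_simp
  have h₂ : k * (π / k) = π := by field_simp
  rw [Phi_eq_of_cos_ne_zero hc.ne', h₁, h₂, sin_pi_sub, sin_pi]
  have : 0 < 1 - ampl (π / k) ^ 2 - ampl (π / k) ^ 4 := by nlinarith
  have := pow_pos ha k
  nlinarith

lemma Phi_pi_div_sub_one_neg {k : ℕ} (hk : 5 ≤ k) : Phi k (π / (k - 1)) < 0 := by
  have hK : (5 : ℝ) ≤ k := by exact_mod_cast hk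
  have hβ₀ : 0 < π / (k - 1) := div_pos pi_pos (by linarith)
  have hβ₁ : π / (k - 1) ≤ π / 4 := div_le_div_of_nonneg_left pi_pos.le (by norm_num) (by linarith)
  have hc : 0 < cos (π / (k - 1)) := cos_pos_of_mem_Ioo ⟨by linarith, by linarith [pi_pos]⟩
  have hs : 0 < sin (π / (k - 1)) := sin_pos_of_pos_of_lt_pi hβ₀ (by linarith [pi_pos])
  have ha := ampl_pos hc
  have ha1 : ampl (π / (k - 1)) < 1 := by
    nlinarith [ampl_sq_le_half (one_le_two_mul_cos_sq (by linarith) hβ₁)]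
  have hk1 : (k : ℝ) - 1 ≠ 0 := by linarith
  have h₁ : (k - 1) * (π / (k - 1)) = π := by field_simp
  have h₂ : (k - 2) * (π / (k - 1)) = π - π / (k - 1) := by field_simp; ring
  rw [Phi, h₁, h₂, sin_pi, sin_pi_sub]
  have := pow_lt_pow_right_of_lt_one₀ ha ha1 (by omega : 3 < k)
  nlinarith

lemma existsUnique_mem_Ioo_eq_of_strictAntiOn {f : ℝ → ℝ} {a b y : ℝ} (hab : a ≤ b)
    (hf : ContinuousOn f (Icc a b)) (hanti : StrictAntiOn f (Icc a b)) (hb : f b < y)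
    (ha : y < f a) : ∃! x, x ∈ Ioo a b ∧ f x = y := by
  obtain ⟨x, hx, hfx⟩ := intermediate_value_Ioo' hab hf ⟨hb, ha⟩
  exact ⟨x, ⟨hx, hfx⟩, fun x' ⟨hx', hfx'⟩ =>
    hanti.injOn (Ioo_subset_Icc_self hx') (Ioo_subset_Icc_self hx) (hfx'.trans hfx.symm)⟩

lemma existsUnique_Phi_eq_zero {k : ℕ} (hk : 5 ≤ k) :
    ∃! η, η ∈ Ioo (π / k) (π / (k - 1)) ∧ Phi k η = 0 := by
  have hK : (5 : ℝ) ≤ k := by exact_mod_cast hk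
  have hαβ : π / k < π / (k - 1) := div_lt_div_of_pos_left pi_pos (by linarith) (by linarith)
  have hcos : ∀ η ∈ Icc (π / k) (π / (k - 1)), cos η ≠ 0 := fun η hη =>
    (cos_pos_of_mem_Ioo ⟨by linarith [pi_pos, hη.1, div_pos pi_pos (by linarith : (0 : ℝ) < k)],
      hη.2.trans_lt (div_lt_div_of_pos_left pi_pos (by norm_num) (by linarith))⟩).ne'
  have hcont : ContinuousOn (Phi k) (Icc (π / k) (π / (k - 1))) := fun η hη =>
    (hasDerivAt_Phi (hcos η hη)).continuousAt.continuousWithinAt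
  have hanti : StrictAntiOn (Phi k) (Icc (π / k) (π / (k - 1))) := by
    refine strictAntiOn_of_deriv_neg (convex_Icc _ _) hcont fun η hη => ?_
    rw [interior_Icc] at hη
    rw [(hasDerivAt_Phi (hcos η (Ioo_subset_Icc_self hη))).deriv]
    exact PhiDeriv_neg hk hη
  exact existsUnique_mem_Ioo_eq_of_strictAntiOn hαβ.le hcont hanti
    (Phi_pi_div_sub_one_neg hk) (Phi_pi_div_pos (by omega))

lemma Phi_four_eq {η : ℝ} (h : cos η ≠ 0) :
    Phi 4 η = sin η * (4 * cos η ^ 2 - 1) * (8 * cos η ^ 4 - 1) / (8 * cos η ^ 4) := by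
  have hs3 : sin η ^ 3 = sin η * (1 - cos η ^ 2) := by rw [pow_succ, sin_sq]; ring
  rw [Phi, ampl, show ((4 : ℕ) : ℝ) - 1 = 3 by norm_num, show ((4 : ℕ) : ℝ) - 2 = 2 by norm_num,
    sin_three_mul, sin_two_mul, hs3]
  field_simp
  ring

lemma existsUnique_Phi_four_eq_zero : ∃! η, η ∈ Ioo (π / 4) (π / 3) ∧ Phi 4 η = 0 := by
  have hcos : ∀ η ∈ Icc (π / 4) (π / 3), 1 / 2 ≤ cos η := fun η hη => by
    rw [← cos_pi_div_three]
    exact cos_le_cos_of_nonneg_of_le_pi (by linarith [pi_pos, hη.1]) (by linarith [pi_pos]) hη.2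
  have hanti : StrictAntiOn (fun η => 8 * cos η ^ 4 - 1) (Icc (π / 4) (π / 3)) :=
    fun x hx y hy hxy => by
      have := cos_lt_cos_of_nonneg_of_le_pi (by linarith [pi_pos, hx.1])
        (by linarith [pi_pos, hy.2]) hxy
      have := pow_lt_pow_left₀ this (by linarith [hcos y hy]) four_ne_zero
      dsimp only
      linarith
  have hzero : ∃! η, η ∈ Ioo (π / 4) (π / 3) ∧ 8 * cos η ^ 4 - 1 = 0 := by
    refine existsUnique_mem_Ioo_eq_of_strictAntiOn (by linarith [pi_pos])
      (by fun_prop) hanti ?_ ?_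
    · rw [cos_pi_div_three]; norm_num
    · rw [cos_pi_div_four, show (√2 / 2) ^ 4 = (√2 ^ 2) ^ 2 / 16 by ring, sq_sqrt zero_le_two]
      norm_num
  refine (existsUnique_congr fun η => and_congr_right fun hη => ?_).mp hzero
  have hc : 1 / 2 < cos η := by
    rw [← cos_pi_div_three]
    exact cos_lt_cos_of_nonneg_of_le_pi (by linarith [pi_pos, hη.1]) (by linarith [pi_pos]) hη.2
  have hs : 0 < sin η := sin_pos_of_pos_of_lt_pi (by linarith [pi_pos, hη.1])
    (by linarith [pi_pos, hη.2])
  have h4 : 0 < 4 * cos η ^ 2 - 1 := by nlinarith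
  rw [Phi_four_eq (by linarith), div_eq_zero_iff]
  simp [hs.ne', h4.ne', (by linarith : cos η ≠ 0)]

theorem stmt11 (k : ℕ) (hk : 4 ≤ k) (A : ℝ → ℝ)
    (hA : ∀ η, A η = 1 / (2 * Real.cos η))
    (Φ : ℝ → ℝ)
    (hΦ : ∀ η, Φ η = (1 - A η ^ 4) * Real.sin (((k : ℝ) - 1) * η)
      - A η ^ 3 * Real.sin (((k : ℝ) - 2) * η) + A η ^ k * Real.sin η) :
    ∃! η : ℝ, η ∈ Set.Ioo (π / k) (π / ((k : ℝ) - 1)) ∧ Φ η = 0 := by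
  obtain rfl : Φ = Phi k := funext fun η => by rw [hΦ, hA, Phi, ampl]
  rcases hk.eq_or_lt with rfl | hk5
  · simpa [show (4 : ℝ) - 1 = 3 by norm_num] using existsUnique_Phi_four_eq_zero
  · exact existsUnique_Phi_eq_zero hk5
end

section
/- Let k ≥ 5 be an integer and η ∈ (π/k, π/(k-1)). With |a| = 1/(2cos η), the derivative of Φ_k(η) = (1-|a|⁴)sin((k-1)η) - |a|³sin((k-2)η) + |a|^k sin η with respect to η is strictly negative. (Here d|a|/dη = 2|a|² sin η.) -/
open Real Set

set_option maxHeartbeats 2000000 in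
private theorem stmt12_aux (K p b a s c s1 c1 s2 c2 x y : ℝ)
    (hK : 5 ≤ K) (hp : 0 < p) (hpu : p < 3.15)
    (hb2 : b ^ 2 = 2) (hb0 : 0 < b)
    (ha0 : 0 < a) (hab : a ≤ b / 2)
    (hs0 : 0 < s) (hsu : s ≤ p / (K - 1))
    (hc0 : 0 < c) (hcu : c ≤ 1)
    (hs1 : 0 ≤ s1) (hs2 : 0 ≤ s2)
    (hc1 : c1 ≤ -(b / 2)) (hc2 : -1 ≤ c2)
    (hx : 0 ≤ x) (hxa : x ≤ a ^ 4) (hy : 0 ≤ y) (hya : y ≤ a ^ 5) :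
    ((0 - 4 * a ^ 3 * (2 * s * a ^ 2)) * s1 + (1 - a ^ 4) * (c1 * ((K - 1) * 1)))
      - (3 * a ^ 2 * (2 * s * a ^ 2) * s2 + a ^ 3 * (c2 * ((K - 2) * 1)))
      + (K * x * (2 * s * a ^ 2) * s + y * c) < 0 := by
  have hblb : (1.414 : ℝ) ≤ b := by nlinarith
  have hbub : b ≤ (1.415 : ℝ) := by nlinarith
  have ha2 : a ^ 2 ≤ 1 / 2 := by nlinarith
  have ha3 : a ^ 3 ≤ b / 4 := by nlinarith [sq_nonneg a, sq_nonneg (a - b/2)]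
  have ha4 : a ^ 4 ≤ 1 / 4 := by nlinarith [sq_nonneg (a^2 - 1/2)]
  have ha5 : a ^ 5 ≤ b / 8 := by nlinarith [pow_pos ha0 3, mul_le_mul ha3 ha2 (by positivity) (by positivity)]
  have hT1 : (0 - 4 * a ^ 3 * (2 * s * a ^ 2)) * s1 ≤ 0 := by
    apply mul_nonpos_of_nonpos_of_nonneg _ hs1
    have : (0:ℝ) ≤ 4 * a ^ 3 * (2 * s * a ^ 2) := by positivity
    linarith
  have hT2 : (1 - a ^ 4) * (c1 * ((K - 1) * 1)) ≤ (3/4) * (-(b/2)) * (K - 1) := by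
    have h1 : (3:ℝ)/4 ≤ 1 - a ^ 4 := by linarith
    have hX : c1 * (K - 1) ≤ -(b/2) * (K - 1) :=
      mul_le_mul_of_nonneg_right hc1 (by linarith)
    have hXneg : c1 * (K - 1) ≤ 0 :=
      le_trans hX (by nlinarith [mul_nonneg hb0.le (show (0:ℝ) ≤ K - 1 by linarith)])
    have h3 := mul_nonpos_of_nonneg_of_nonpos (by linarith : (0:ℝ) ≤ 1 - a ^ 4 - 3/4) hXneg
    nlinarith [h3, hX]
  have hT3 : (0:ℝ) ≤ 3 * a ^ 2 * (2 * s * a ^ 2) * s2 := by positivity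
  have hT4 : -(a ^ 3 * (c2 * ((K - 2) * 1))) ≤ (b/4) * (K - 2) := by
    have h3 : (0:ℝ) < a ^ 3 := pow_pos ha0 3
    have h1 : -c2 ≤ 1 := by linarith
    have h2 : a ^ 3 * -c2 ≤ b / 4 := by nlinarith [mul_le_mul_of_nonneg_left h1 h3.le]
    have h4 := mul_le_mul_of_nonneg_right h2 (show (0:ℝ) ≤ K - 2 by linarith)
    nlinarith [h4]
  have hT5 : K * x * (2 * s * a ^ 2) * s ≤ 5 * p ^ 2 / 64 := by
    have hg' : 2 * s * a ^ 2 ≤ s := by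
      nlinarith [mul_nonneg hs0.le (by linarith : (0:ℝ) ≤ 1 - 2 * a ^ 2)]
    have hg'0 : (0:ℝ) ≤ 2 * s * a ^ 2 := by positivity
    have hk0 : (0:ℝ) ≤ K := by linarith
    have h14 : x ≤ 1/4 := by linarith
    have step1 : (K * x * (2 * s * a ^ 2)) * s ≤ K * (1/4) * s * s :=
      mul_le_mul_of_nonneg_right
        (mul_le_mul (mul_le_mul_of_nonneg_left h14 hk0) hg' hg'0 (by positivity)) hs0.le
    have step2 : K * (1/4) * s * s ≤ K / 4 * (p / (K - 1)) ^ 2 := by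
      have hsq : s ^ 2 ≤ (p / (K - 1)) ^ 2 := by
        have := pow_le_pow_left₀ hs0.le hsu 2
        linarith
      nlinarith [mul_le_mul_of_nonneg_left hsq (show (0:ℝ) ≤ K / 4 by linarith)]
    have step3 : K / 4 * (p / (K - 1)) ^ 2 ≤ 5 * p ^ 2 / 64 := by
      rw [div_pow, div_mul_div_comm, div_le_div_iff₀
        (by nlinarith [pow_pos (show (0:ℝ) < K - 1 by linarith) 2]) (by norm_num)]
      have hKq : 16 * K ≤ 5 * (K - 1) ^ 2 := by
        nlinarith [mul_nonneg (show (0:ℝ) ≤ K - 5 by linarith) (show (0:ℝ) ≤ 5 * K - 1 by linarith)]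
      nlinarith [mul_le_mul_of_nonneg_right hKq (sq_nonneg p)]
    linarith
  have hT6 : y * c ≤ b / 8 := by
    have h1 : y * c ≤ y * 1 := mul_le_mul_of_nonneg_left hcu hy
    nlinarith
  have hfin : (3/4) * (-(b/2)) * (K - 1) + (b/4) * (K - 2) + 5 * p ^ 2 / 64 + b / 8 < 0 := by
    have hp2 : p ^ 2 < 9.9225 := by nlinarith
    nlinarith [mul_nonneg (by linarith : (0:ℝ) ≤ b - 1.414) (by linarith : (0:ℝ) ≤ K - 5)]
  linarith

set_option maxHeartbeats 1000000 in
theorem stmt12 (k : ℕ) (hk : 5 ≤ k) (A : ℝ → ℝ)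
    (hA : ∀ η, A η = 1 / (2 * Real.cos η))
    (Φ : ℝ → ℝ)
    (hΦ : ∀ η, Φ η = (1 - A η ^ 4) * Real.sin (((k : ℝ) - 1) * η)
      - A η ^ 3 * Real.sin (((k : ℝ) - 2) * η) + A η ^ k * Real.sin η) :
    ∀ η ∈ Set.Ioo (π / k) (π / ((k : ℝ) - 1)), deriv Φ η < 0 := by
  intro η hη
  obtain ⟨hη1, hη2⟩ := hη
  have hk5 : (5:ℝ) ≤ (k:ℝ) := by exact_mod_cast hk
  have hπ := Real.pi_pos
  have hη0 : 0 < η := lt_trans (by positivity) hη1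
  have hK4 : (4:ℝ) ≤ (k:ℝ) - 1 := by linarith
  have hη4 : η < π / 4 := lt_of_lt_of_le hη2 (by gcongr <;> norm_num)
  have hb2 : Real.sqrt 2 ^ 2 = 2 := Real.sq_sqrt (by norm_num)
  have hb0 : 0 < Real.sqrt 2 := Real.sqrt_pos.mpr (by norm_num)
  have hc_lb : Real.sqrt 2 / 2 ≤ Real.cos η := by
    have h := Real.cos_le_cos_of_nonneg_of_le_pi hη0.le (by linarith) hη4.le
    rw [Real.cos_pi_div_four] at h
    linarith
  have hc_pos : 0 < Real.cos η := by nlinarith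
  have hc_ub : Real.cos η ≤ 1 := Real.cos_le_one η
  have haval : A η = 1 / (2 * Real.cos η) := hA η
  have ha_pos : 0 < A η := by rw [haval]; positivity
  have ha_ub : A η ≤ Real.sqrt 2 / 2 := by
    rw [haval, div_le_div_iff₀ (by positivity) (by norm_num)]
    nlinarith
  have ha1 : A η ≤ 1 := by nlinarith
  have hs_pos : 0 < Real.sin η := Real.sin_pos_of_pos_of_lt_pi hη0 (by linarith)
  have hs_ub : Real.sin η ≤ π / ((k:ℝ) - 1) := le_trans (Real.sin_lt hη0).le hη2.le
  have hang1a' : ((k:ℝ) - 1) * η < π := by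
    have := (lt_div_iff₀ (by linarith : (0:ℝ) < (k:ℝ) - 1)).mp hη2
    nlinarith
  have hang1b : 3 * π / 4 ≤ ((k:ℝ) - 1) * η := by
    have h1 : π / (k:ℝ) < η := hη1
    have h2 : ((k:ℝ) - 1) * (π / (k:ℝ)) ≤ ((k:ℝ) - 1) * η :=
      mul_le_mul_of_nonneg_left h1.le (by linarith)
    have h3 : ((k:ℝ) - 1) * (π / (k:ℝ)) = π - π / (k:ℝ) := by field_simp
    have h4 : π / (k:ℝ) ≤ π / 4 := by gcongr <;> linarith
    linarith
  have hs1 : 0 ≤ Real.sin (((k:ℝ) - 1) * η) :=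
    Real.sin_nonneg_of_nonneg_of_le_pi (by nlinarith) hang1a'.le
  have hc1 : Real.cos (((k:ℝ) - 1) * η) ≤ -(Real.sqrt 2 / 2) := by
    have h := Real.cos_le_cos_of_nonneg_of_le_pi
      (by positivity : (0:ℝ) ≤ 3*π/4) hang1a'.le hang1b
    rw [show (3:ℝ)*π/4 = π - π/4 by ring, Real.cos_pi_sub, Real.cos_pi_div_four] at h
    linarith
  have hs2 : 0 ≤ Real.sin (((k:ℝ) - 2) * η) := by
    apply Real.sin_nonneg_of_nonneg_of_le_pi (mul_nonneg (by linarith) hη0.le)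
    nlinarith
  have hc2 : -1 ≤ Real.cos (((k:ℝ) - 2) * η) := Real.neg_one_le_cos _
  have hpowk1 : A η ^ (k - 1) ≤ A η ^ 4 :=
    pow_le_pow_of_le_one ha_pos.le ha1 (by omega)
  have hpowk : A η ^ k ≤ A η ^ 5 := pow_le_pow_of_le_one ha_pos.le ha1 (by omega)
  have hpowk1' : (0:ℝ) ≤ A η ^ (k - 1) := by positivity
  have hpowk' : (0:ℝ) ≤ A η ^ k := by positivity
  -- derivative of A
  have h2c : (2:ℝ) * Real.cos η ≠ 0 := by positivity
  have hgA : HasDerivAt A (2 * Real.sin η * A η ^ 2) η := by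
    have hAfun : A = fun x => (2 * Real.cos x)⁻¹ := by
      funext x; rw [hA x, one_div]
    have h1 : HasDerivAt (fun x => 2 * Real.cos x) (2 * -Real.sin η) η :=
      (Real.hasDerivAt_cos η).const_mul 2
    have h2 := h1.inv h2c
    have hval : 2 * Real.sin η * A η ^ 2 = -(2 * -Real.sin η) / (2 * Real.cos η) ^ 2 := by
      rw [haval]; field_simp
    rw [hval, hAfun]
    exact h2
  have hd1 : HasDerivAt (fun x => Real.sin (((k:ℝ) - 1) * x))
      (Real.cos (((k:ℝ) - 1) * η) * (((k:ℝ) - 1) * 1)) η :=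
    (Real.hasDerivAt_sin (((k:ℝ) - 1) * η)).comp η ((hasDerivAt_id η).const_mul ((k:ℝ) - 1))
  have hd2 : HasDerivAt (fun x => Real.sin (((k:ℝ) - 2) * x))
      (Real.cos (((k:ℝ) - 2) * η) * (((k:ℝ) - 2) * 1)) η :=
    (Real.hasDerivAt_sin (((k:ℝ) - 2) * η)).comp η ((hasDerivAt_id η).const_mul ((k:ℝ) - 2))
  have hΦfun : Φ = fun x => (1 - A x ^ 4) * Real.sin (((k:ℝ) - 1) * x)
      - A x ^ 3 * Real.sin (((k:ℝ) - 2) * x) + A x ^ k * Real.sin x := funext hΦ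
  have hD : HasDerivAt Φ
      ((((0 - (4:ℕ) * A η ^ 3 * (2 * Real.sin η * A η ^ 2)) * Real.sin (((k:ℝ) - 1) * η)
          + (1 - A η ^ 4) * (Real.cos (((k:ℝ) - 1) * η) * (((k:ℝ) - 1) * 1)))
        - (((3:ℕ) * A η ^ 2 * (2 * Real.sin η * A η ^ 2)) * Real.sin (((k:ℝ) - 2) * η)
          + A η ^ 3 * (Real.cos (((k:ℝ) - 2) * η) * (((k:ℝ) - 2) * 1))))
        + (((k:ℕ) * A η ^ (k - 1) * (2 * Real.sin η * A η ^ 2)) * Real.sin η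
          + A η ^ k * Real.cos η)) η := by
    rw [hΦfun]
    exact ((((hasDerivAt_const η (1:ℝ)).sub (hgA.pow 4)).mul hd1).sub
      ((hgA.pow 3).mul hd2)).add ((hgA.pow k).mul (Real.hasDerivAt_sin η))
  rw [hD.deriv]
  have hπub : π < 3.15 := by linarith [Real.pi_lt_d2]
  have := stmt12_aux (k:ℝ) π (Real.sqrt 2) (A η) (Real.sin η) (Real.cos η)
    (Real.sin (((k:ℝ) - 1) * η)) (Real.cos (((k:ℝ) - 1) * η))
    (Real.sin (((k:ℝ) - 2) * η)) (Real.cos (((k:ℝ) - 2) * η))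
    (A η ^ (k - 1)) (A η ^ k)
    hk5 hπ hπub hb2 hb0 ha_pos ha_ub hs_pos hs_ub hc_pos hc_ub hs1 hs2 hc1 hc2
    hpowk1' hpowk1 hpowk' hpowk
  push_cast
  linarith [this]
end

section
/- Let k ≥ 4 and let η_k, η_{k+1} be the unique zeros of Φ_k in (π/k, π/(k-1)) and of Φ_{k+1} in (π/(k+1), π/k), respectively. Then for all η ∈ [η_{k+1}, η_k) and all integers j ≥ k, Θ_j(η) := (1-|a|⁴) sin η + |a|^{j+1} sin(jη) > 0, where |a| = 1/(2cos η). -/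
/-!
Write `a = 1 / (2 cos η)`. Since `sin (j η) ≥ -1`, it suffices that
`a ^ (j + 1) < (1 - a ^ 4) sin η`.

For `k ≥ 5` we have `η < π / 4`, hence `a ^ 2 < 1 / 2`, and the exponentially small `a ^ (j + 1)`
loses against Jordan's bound `sin η > 2 / (j + 1)`.

For `k = 4`, `a ^ 2 Φ₄ = sin η (1 - a ^ 2) (1 - 2 a ^ 4)`, so `a (η₄) ^ 4 = 1 / 2` and, `a` being
increasing, `a ^ 4 < 1 / 2` on `[η₅, η₄)`. There `Θ₄ = sin η (1 + a ^ 2 - 3 a ^ 4) > 0`, and for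
`j ≥ 5`, `a ^ (j + 1) ≤ a ^ 6 < sin η / 2` because `a ^ 2 < sin η` as soon as `η > π / 6`.
-/

open Real Set

lemma one_sub_pow_four_mul_add_pow_mul_pos {a s x : ℝ} {n : ℕ} (ha : 0 ≤ a) (hx : -1 ≤ x)
    (h : a ^ n < (1 - a ^ 4) * s) : 0 < (1 - a ^ 4) * s + a ^ n * x := by
  nlinarith [mul_le_mul_of_nonneg_left hx (pow_nonneg ha n)]

lemma four_mul_add_two_le_three_mul_two_pow {m : ℕ} (hm : 3 ≤ m) : 4 * m + 2 ≤ 3 * 2 ^ m := by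
  induction m, hm using Nat.le_induction with
  | base => norm_num
  | succ m hm ih =>
    have : 4 ≤ 3 * 2 ^ m :=
      le_trans (by norm_num) (Nat.mul_le_mul_left 3 (Nat.pow_le_pow_right two_pos hm))
    rw [pow_succ]; omega

lemma pow_lt_one_sub_pow_four_mul_of_sq_lt_half {a s : ℝ} {n : ℕ} (ha : 0 ≤ a)
    (ha2 : a ^ 2 < 1 / 2) (hn : 6 ≤ n) (hs : 2 / n < s) : a ^ n < (1 - a ^ 4) * s := by
  have hn' : (6 : ℝ) ≤ n := by exact_mod_cast hn
  have ha1 : a ≤ 1 := by nlinarith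
  have hs0 : 0 < s := lt_trans (by positivity) hs
  have h2n : (2 * n : ℝ) ≤ 3 * 2 ^ (n / 2) := by
    have := four_mul_add_two_le_three_mul_two_pow (m := n / 2) (by omega)
    exact_mod_cast (show 2 * n ≤ 3 * 2 ^ (n / 2) by omega)
  calc a ^ n ≤ a ^ (2 * (n / 2)) := pow_le_pow_of_le_one ha ha1 (by omega)
    _ = (a ^ 2) ^ (n / 2) := pow_mul a 2 _
    _ ≤ (1 / 2) ^ (n / 2) := pow_le_pow_left₀ (sq_nonneg a) ha2.le _
    _ ≤ 3 / (2 * n) := by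
      rw [div_pow, one_pow, div_le_div_iff₀ (by positivity) (by positivity)]; linarith
    _ < 3 / 4 * s := by
      rw [div_lt_iff₀ (by positivity)] at hs
      rw [div_lt_iff₀ (by positivity)]; nlinarith
    _ ≤ (1 - a ^ 4) * s := by gcongr; nlinarith

lemma pow_lt_one_sub_pow_four_mul_of_pow_four_lt_half {a s : ℝ} {n : ℕ} (ha : 0 ≤ a)
    (ha4 : a ^ 4 < 1 / 2) (has : a ^ 2 < s) (hn : 6 ≤ n) : a ^ n < (1 - a ^ 4) * s := by
  have ha1 : a ≤ 1 := (pow_le_one_iff_of_nonneg ha (n := 4) (by norm_num)).1 (by linarith)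
  calc a ^ n ≤ a ^ 6 := pow_le_pow_of_le_one ha ha1 hn
    _ = a ^ 4 * a ^ 2 := by ring
    _ ≤ 1 / 2 * a ^ 2 := by gcongr
    _ < 1 / 2 * s := by gcongr
    _ ≤ (1 - a ^ 4) * s := by
      gcongr
      · exact (sq_nonneg a).trans has.le
      · linarith

lemma sq_lt_of_pow_four_lt_half {a s c : ℝ} (hac : 2 * a * c = 1)
    (hsc : s ^ 2 + c ^ 2 = 1) (hs : 1 / 2 < s) (ha4 : a ^ 4 < 1 / 2) : a ^ 2 < s := by
  have ht : 1 / 3 < a ^ 2 := by nlinarith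
  have ht' : a ^ 2 < 0.71 := by nlinarith
  refine lt_of_pow_lt_pow_left₀ 2 (by linarith) ?_
  -- with `t = a ^ 2` this is `4 t ^ 3 - 4 t + 1 < 0`, true on `[1 / 3, 0.71]` by convexity
  nlinarith [mul_pos (sub_pos.2 ht) (sub_pos.2 ht')]

lemma two_div_lt_sin {x y : ℝ} (hy : 0 < y) (hxy : π / y < x) (hx : x ≤ π / 2) :
    2 / y < sin x := by
  calc 2 / y = 2 / π * (π / y) := by field_simp
    _ < 2 / π * x := by gcongr
    _ ≤ sin x := mul_le_sin ((div_pos pi_pos hy).le.trans hxy.le) hx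

lemma sq_mul_phi_four_eq {a η : ℝ} (hac : 2 * a * cos η = 1) :
    a ^ 2 * ((1 - a ^ 4) * sin (3 * η) - a ^ 3 * sin (2 * η) + a ^ 4 * sin η)
      = sin η * (1 - a ^ 2) * (1 - 2 * a ^ 4) := by
  rw [sin_three_mul, sin_two_mul]
  linear_combination sin η * ((1 - a ^ 4) * (2 * a * cos η + 1) - a ^ 4) * hac
    - 4 * a ^ 2 * (1 - a ^ 4) * sin η * sin_sq_add_cos_sq η

lemma theta_four_eq {a η : ℝ} (hac : 2 * a * cos η = 1) :
    (1 - a ^ 4) * sin η + a ^ 5 * sin (4 * η) = sin η * (1 + a ^ 2 - 3 * a ^ 4) := by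
  rw [show 4 * η = 2 * (2 * η) by ring, sin_two_mul, sin_two_mul, cos_two_mul]
  linear_combination sin η * (a ^ 2 * ((2 * a * cos η) ^ 2 + 2 * a * cos η + 1) - 2 * a ^ 4) * hac

lemma strictMonoOn_one_div_two_mul_cos :
    StrictMonoOn (fun η => 1 / (2 * cos η)) (Ico 0 (π / 2)) := by
  intro x hx y hy hxy
  have hcy : 0 < cos y := cos_pos_of_mem_Ioo ⟨by linarith [hy.1, pi_pos], hy.2⟩
  have hc : cos y < cos x := strictAntiOn_cos ⟨hx.1, by linarith [hx.2, pi_pos]⟩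
    ⟨hy.1, by linarith [hy.2, pi_pos]⟩ hxy
  exact one_div_lt_one_div_of_lt (by positivity) (by linarith)

lemma pow_four_eq_half_of_phi_four_eq_zero {a η : ℝ} (hη : 0 < η) (hη' : η < π / 3)
    (hac : 2 * a * cos η = 1)
    (hΦ : (1 - a ^ 4) * sin (3 * η) - a ^ 3 * sin (2 * η) + a ^ 4 * sin η = 0) :
    a ^ 4 = 1 / 2 := by
  have hs : 0 < sin η := sin_pos_of_pos_of_lt_pi hη (by linarith [pi_pos])
  have hc : 1 / 2 < cos η := by
    rw [← cos_pi_div_three]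
    exact cos_lt_cos_of_nonneg_of_le_pi hη.le (by linarith [pi_pos]) hη'
  have ha : 0 < a := by nlinarith
  have ha1 : a < 1 := by nlinarith
  have h := sq_mul_phi_four_eq hac
  rw [hΦ, mul_zero] at h
  have : 1 - 2 * a ^ 4 = 0 := by
    rcases mul_eq_zero.1 h.symm with h | h
    · rcases mul_eq_zero.1 h with h | h
      · linarith
      · nlinarith
    · exact h
  linarith

lemma pow_four_lt_half_of_lt_of_phi_four_eq_zero {A : ℝ → ℝ}
    (hA : ∀ η, A η = 1 / (2 * cos η)) {η η₄ : ℝ} (hη : 0 < η) (hlt : η < η₄) (hη₄ : η₄ < π / 3)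
    (hΦ : (1 - A η₄ ^ 4) * sin (3 * η₄) - A η₄ ^ 3 * sin (2 * η₄) + A η₄ ^ 4 * sin η₄ = 0) :
    A η ^ 4 < 1 / 2 := by
  have hc : 0 < cos η₄ := cos_pos_of_mem_Ioo ⟨by linarith [pi_pos], by linarith [pi_pos]⟩
  have h4 : A η₄ ^ 4 = 1 / 2 :=
    pow_four_eq_half_of_phi_four_eq_zero (hη.trans hlt) hη₄ (by rw [hA]; field_simp) hΦ
  have hmono : A η < A η₄ := by
    rw [hA, hA]
    exact strictMonoOn_one_div_two_mul_cos ⟨hη.le, by linarith [pi_pos]⟩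
      ⟨(hη.trans hlt).le, by linarith [pi_pos]⟩ hlt
  have hApos : 0 < A η := by
    have : 0 < cos η := cos_pos_of_mem_Ioo ⟨by linarith [pi_pos], by linarith [pi_pos]⟩
    rw [hA]; positivity
  exact h4 ▸ pow_lt_pow_left₀ hmono hApos.le (by norm_num)

lemma theta_pos_of_pow_four_lt_half {a η : ℝ} {j : ℕ} (hj : 4 ≤ j) (hη : π / 6 < η)
    (hη' : η < π / 2) (hac : 2 * a * cos η = 1) (ha4 : a ^ 4 < 1 / 2) :
    0 < (1 - a ^ 4) * sin η + a ^ (j + 1) * sin (j * η) := by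
  have hc : 0 < cos η := cos_pos_of_mem_Ioo ⟨by linarith [pi_pos], hη'⟩
  have ha : 0 < a := by nlinarith
  have hs : 1 / 2 < sin η := by
    rw [← sin_pi_div_six]
    exact sin_lt_sin_of_lt_of_le_pi_div_two (by linarith [pi_pos]) hη'.le hη
  rcases hj.eq_or_lt with rfl | hj5
  · rw [show ((4 : ℕ) : ℝ) * η = 4 * η by norm_num, theta_four_eq hac]
    exact mul_pos (by linarith) (by nlinarith)
  · have has := sq_lt_of_pow_four_lt_half hac (sin_sq_add_cos_sq η) hs ha4
    exact one_sub_pow_four_mul_add_pow_mul_pos ha.le (neg_one_le_sin _)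
      (pow_lt_one_sub_pow_four_mul_of_pow_four_lt_half ha.le ha4 has (by omega))

lemma theta_pos_of_lt_pi_div_four {a η : ℝ} {j : ℕ} (hj : 5 ≤ j) (hη : π / (j + 1) < η)
    (hη' : η < π / 4) (hac : 2 * a * cos η = 1) :
    0 < (1 - a ^ 4) * sin η + a ^ (j + 1) * sin (j * η) := by
  have hη₀ : 0 < η := lt_trans (by positivity) hη
  have hcos2 : 0 < cos (2 * η) := cos_pos_of_mem_Ioo ⟨by linarith [pi_pos], by linarith⟩
  have hc2 : 1 / 2 < cos η ^ 2 := by rw [cos_sq η]; linarith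
  have hc : 0 < cos η := cos_pos_of_mem_Ioo ⟨by linarith [pi_pos], by linarith⟩
  have ha : 0 < a := by nlinarith
  have ha2 : a ^ 2 < 1 / 2 := by nlinarith
  have hs : 2 / ((j + 1 : ℕ) : ℝ) < sin η :=
    two_div_lt_sin (by positivity) (by push_cast; exact hη) (by linarith)
  exact one_sub_pow_four_mul_add_pow_mul_pos ha.le (neg_one_le_sin _)
    (pow_lt_one_sub_pow_four_mul_of_sq_lt_half ha.le ha2 (by omega) hs)

theorem stmt13 (k : ℕ) (hk : 4 ≤ k) (A : ℝ → ℝ)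
    (hA : ∀ η, A η = 1 / (2 * Real.cos η))
    (Φ : ℕ → ℝ → ℝ)
    (hΦ : ∀ j η, Φ j η = (1 - A η ^ 4) * Real.sin (((j : ℝ) - 1) * η)
      - A η ^ 3 * Real.sin (((j : ℝ) - 2) * η) + A η ^ j * Real.sin η)
    (ηk : ℝ) (hηk : ηk ∈ Set.Ioo (π / k) (π / ((k : ℝ) - 1)) ∧ Φ k ηk = 0)
    (ηk1 : ℝ) (hηk1 : ηk1 ∈ Set.Ioo (π / (k + 1)) (π / k) ∧ Φ (k + 1) ηk1 = 0) :
    ∀ η : ℝ, ηk1 ≤ η → η < ηk → ∀ j : ℕ, k ≤ j →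
      0 < (1 - A η ^ 4) * Real.sin η + A η ^ (j + 1) * Real.sin (j * η) := by
  intro η hge hlt j hj
  have hπ := pi_pos
  have hk' : (4 : ℝ) ≤ k := by exact_mod_cast hk
  have hη : π / (k + 1) < η := hηk1.1.1.trans_le hge
  have hη₀ : 0 < η := lt_trans (by positivity) hη
  have hηk' : ηk < π / (k - 1) := hηk.1.2
  have hηk₃ : ηk < π / 3 := hηk'.trans_le (by gcongr; linarith)
  have hac : 2 * A η * cos η = 1 := by
    have : 0 < cos η := cos_pos_of_mem_Ioo ⟨by linarith, by linarith⟩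
    rw [hA]; field_simp
  rcases hk.eq_or_lt with rfl | hk5
  · have hΦ₄ : (1 - A ηk ^ 4) * sin (3 * ηk) - A ηk ^ 3 * sin (2 * ηk) + A ηk ^ 4 * sin ηk = 0 := by
      rw [← hηk.2, hΦ]; norm_num
    have hη₅ : π / 5 < η := by norm_num at hη; exact hη
    exact theta_pos_of_pow_four_lt_half hj (by linarith) (by linarith) hac
      (pow_four_lt_half_of_lt_of_phi_four_eq_zero hA hη₀ hlt hηk₃ hΦ₄)
  · have hk₅ : (5 : ℝ) ≤ k := by exact_mod_cast hk5
    have hη₄ : η < π / 4 := hlt.trans (hηk'.trans_le (by gcongr; linarith))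
    exact theta_pos_of_lt_pi_div_four (by omega) (lt_of_le_of_lt (by gcongr) hη) hη₄ hac
end

section
/- Let k ≥ 4 and let η_k denote the unique zero of Φ_k in (π/k, π/(k-1)). Then for all η ∈ [η_{k+1}, η_k) and all integers j ≥ k, Ψ_j(η) := sin η + |a|^{j-2} sin((j+1)η) > 0, where |a| = 1/(2cos η). -/
open Real Set

/-! Write `A = 1 / (2 cos η)`. On `[0, π/3]` we have `0 ≤ A ≤ 1`, so for `j ≥ k` the term
`A^(j-2) sin((j+1)η)` is at least `-A^(k-2)`, and it suffices to show `A^(k-2) < sin η`.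

For `k ≥ 5`, `η < π/4` gives `A² < 1/2`, while `η > π/(k+1)` gives `sin² η > (1/2)^(k-2)`:
for `k = 5` because `sin η > 1/2`, for `k ≥ 6` by Jordan's inequality `sin η > 2/(k+1)` and
`(k+1)² ≤ 2^k`.

For `k = 4` the zero `η₄` of `Φ₄` is explicit: `Φ₄ = sin η (4cos² η - 1)(1 - 1/(8cos⁴ η))`, so
`cos⁴ η₄ = 1/8`. For `η ∈ (π/6, η₄)` this gives `t = cos² η ∈ (1/√8, 3/4)`, where
`16 t² (1 - t) > 1`, i.e. `A² < sin η`. -/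

lemma pos_sin_add_pow_mul_sin {x y B : ℝ} {m n : ℕ} (hB0 : 0 ≤ B) (hB1 : B ≤ 1) (hmn : m ≤ n)
    (h : B ^ m < sin x) : 0 < sin x + B ^ n * sin y := by
  have hBn : B ^ n ≤ B ^ m := pow_le_pow_of_le_one hB0 hB1 hmn
  nlinarith [neg_one_le_sin y, pow_nonneg hB0 n]

lemma one_div_two_mul_cos_mem_Icc {x : ℝ} (h0 : 0 ≤ x) (h : x ≤ π / 3) :
    1 / (2 * cos x) ∈ Icc 0 1 := by
  have hc : 1 / 2 ≤ cos x := by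
    simpa only [cos_pi_div_three] using cos_le_cos_of_nonneg_of_le_pi h0 (by linarith [pi_pos]) h
  refine ⟨by positivity, ?_⟩
  rw [div_le_one (by linarith)]
  linarith

lemma phi_four_eq {x : ℝ} (hc : cos x ≠ 0) :
    (1 - (1 / (2 * cos x)) ^ 4) * sin (3 * x) - (1 / (2 * cos x)) ^ 3 * sin (2 * x)
      + (1 / (2 * cos x)) ^ 4 * sin x
      = sin x * (4 * cos x ^ 2 - 1) * (1 - 1 / (8 * cos x ^ 4)) := by
  rw [sin_three_mul, sin_two_mul]
  field_simp
  linear_combination (32 * sin x - 512 * sin x * cos x ^ 4) * sin_sq_add_cos_sq x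

lemma cos_pow_four_eq_of_phi_four_eq_zero {x : ℝ} (hx : x ∈ Ioo 0 (π / 3))
    (h : (1 - (1 / (2 * cos x)) ^ 4) * sin (3 * x) - (1 / (2 * cos x)) ^ 3 * sin (2 * x)
      + (1 / (2 * cos x)) ^ 4 * sin x = 0) :
    cos x ^ 4 = 1 / 8 := by
  have hs : 0 < sin x := sin_pos_of_pos_of_lt_pi hx.1 (by linarith [hx.2, pi_pos])
  have hc : 1 / 2 < cos x := by
    simpa only [cos_pi_div_three] using
      cos_lt_cos_of_nonneg_of_le_pi hx.1.le (by linarith [pi_pos]) hx.2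
  rw [phi_four_eq (by linarith)] at h
  have h4 : 4 * cos x ^ 2 - 1 ≠ 0 := by nlinarith
  have h8 : 1 - 1 / (8 * cos x ^ 4) = 0 := by simpa [hs.ne', h4] using h
  have : 8 * cos x ^ 4 ≠ 0 := by positivity
  field_simp at h8
  linarith

lemma sq_one_div_two_mul_cos_lt_sin {x : ℝ} (hlo : π / 6 < x) (hhi : x < π / 2)
    (hc : 1 / 8 < cos x ^ 4) : (1 / (2 * cos x)) ^ 2 < sin x := by
  have hs : 0 < sin x := sin_pos_of_pos_of_lt_pi (by linarith [pi_pos]) (by linarith)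
  have hcpos : 0 < cos x := cos_pos_of_mem_Ioo ⟨by linarith [pi_pos], hhi⟩
  have hc34 : cos x ^ 2 < 3 / 4 := by
    have h := cos_lt_cos_of_nonneg_of_le_pi (by linarith [pi_pos]) (by linarith) hlo
    rw [cos_pi_div_six] at h
    have h3 : √3 ^ 2 = 3 := sq_sqrt (by norm_num)
    nlinarith
  -- `4 sin x cos² x > 1` follows from `16 t² (1 - t) > 1` for `t = cos² x ∈ (1/√8, 3/4)`
  have h16 : 1 < 16 * (cos x ^ 2) ^ 2 * (1 - cos x ^ 2) := by
    nlinarith [mul_pos (show (0:ℝ) < cos x ^ 4 - 1 / 8 by linarith)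
      (show (0:ℝ) < 3 / 4 - cos x ^ 2 by linarith)]
  have hkey : 1 < 4 * sin x * cos x ^ 2 := by
    have hsq : (4 * sin x * cos x ^ 2) ^ 2 = 16 * (cos x ^ 2) ^ 2 * (1 - cos x ^ 2) := by
      linear_combination (16 * cos x ^ 4) * sin_sq_add_cos_sq x
    nlinarith [mul_pos (mul_pos (show (0:ℝ) < 4 by norm_num) hs) (pow_pos hcpos 2)]
  rw [div_pow, one_pow, mul_pow, div_lt_iff₀ (by positivity)]
  linarith

lemma sq_one_div_two_mul_cos_lt_half {x : ℝ} (h0 : 0 ≤ x) (h : x < π / 4) :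
    (1 / (2 * cos x)) ^ 2 < 1 / 2 := by
  have hc := cos_lt_cos_of_nonneg_of_le_pi h0 (by linarith [pi_pos]) h
  rw [cos_pi_div_four] at hc
  have h2 : √2 ^ 2 = 2 := sq_sqrt (by norm_num)
  have hc2 : 1 / 2 < cos x ^ 2 := by nlinarith [sqrt_nonneg 2]
  rw [div_pow, one_pow, mul_pow, div_lt_div_iff₀ (by positivity) (by norm_num)]
  linarith

lemma succ_sq_le_two_pow {k : ℕ} (hk : 6 ≤ k) : (k + 1) ^ 2 ≤ 2 ^ k := by
  induction k, hk using Nat.le_induction with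
  | base => norm_num
  | succ n hn ih =>
    calc (n + 1 + 1) ^ 2 ≤ 2 * (n + 1) ^ 2 := by nlinarith
      _ ≤ 2 ^ (n + 1) := by rw [pow_succ 2 n]; linarith

lemma half_pow_lt_sin_sq {k : ℕ} {x : ℝ} (hk : 5 ≤ k) (hlo : π / (k + 1) < x)
    (hhi : x < π / 2) : (1 / 2 : ℝ) ^ (k - 2) < sin x ^ 2 := by
  have hx0 : 0 < x := lt_trans (by positivity) hlo
  rcases hk.eq_or_lt with rfl | hk6
  · have hs := sin_lt_sin_of_lt_of_le_pi_div_two (by linarith [pi_pos]) hhi.le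
      (show π / 6 < x by norm_num at hlo; exact hlo)
    rw [sin_pi_div_six] at hs
    norm_num
    nlinarith
  · have hs : 2 / (k + 1) < sin x := by
      calc 2 / (k + 1 : ℝ) = 2 / π * (π / (k + 1)) := by field_simp
        _ < 2 / π * x := by gcongr
        _ < sin x := mul_lt_sin hx0 hhi
    have hpow : ((k : ℝ) + 1) ^ 2 ≤ 2 ^ k := by exact_mod_cast succ_sq_le_two_pow hk6
    have h2k : (2 : ℝ) ^ k = 2 ^ (k - 2) * 2 ^ 2 := by rw [← pow_add, Nat.sub_add_cancel (by omega)]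
    calc (1 / 2 : ℝ) ^ (k - 2) = 4 / 2 ^ k := by rw [h2k, one_div_pow]; field_simp; norm_num
      _ ≤ (2 / (k + 1)) ^ 2 := by
          rw [div_pow, div_le_div_iff₀ (by positivity) (by positivity)]; nlinarith
      _ < sin x ^ 2 := by gcongr

lemma one_div_two_mul_cos_pow_lt_sin {k : ℕ} {x : ℝ} (hk : 5 ≤ k) (hlo : π / (k + 1) < x)
    (hhi : x < π / 4) : (1 / (2 * cos x)) ^ (k - 2) < sin x := by
  have hx0 : 0 < x := lt_trans (by positivity) hlo
  have hs : 0 < sin x := sin_pos_of_pos_of_lt_pi hx0 (by linarith [pi_pos])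
  refine lt_of_pow_lt_pow_left₀ 2 hs.le ?_
  calc ((1 / (2 * cos x)) ^ (k - 2)) ^ 2 = ((1 / (2 * cos x)) ^ 2) ^ (k - 2) :=
        pow_right_comm _ _ _
    _ ≤ (1 / 2) ^ (k - 2) := by
        gcongr
        exact (sq_one_div_two_mul_cos_lt_half hx0.le hhi).le
    _ < sin x ^ 2 := half_pow_lt_sin_sq hk hlo (by linarith [pi_pos])

theorem stmt14 (k : ℕ) (hk : 4 ≤ k) (A : ℝ → ℝ)
    (hA : ∀ η, A η = 1 / (2 * Real.cos η))
    (Φ : ℕ → ℝ → ℝ)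
    (hΦ : ∀ j η, Φ j η = (1 - A η ^ 4) * Real.sin (((j : ℝ) - 1) * η)
      - A η ^ 3 * Real.sin (((j : ℝ) - 2) * η) + A η ^ j * Real.sin η)
    (ηk : ℝ) (hηk : ηk ∈ Set.Ioo (π / k) (π / ((k : ℝ) - 1)) ∧ Φ k ηk = 0)
    (ηk1 : ℝ) (hηk1 : ηk1 ∈ Set.Ioo (π / (k + 1)) (π / k) ∧ Φ (k + 1) ηk1 = 0) :
    ∀ η : ℝ, ηk1 ≤ η → η < ηk → ∀ j : ℕ, k ≤ j →
      0 < Real.sin η + A η ^ (j - 2) * Real.sin ((j + 1) * η) := by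
  obtain ⟨⟨hηk_lo, hηk_hi⟩, hΦk⟩ := hηk
  intro η hη_lo hη_hi j hj
  have hk3 : (3 : ℝ) ≤ k - 1 := by
    have : (4 : ℝ) ≤ k := by exact_mod_cast hk
    linarith
  have hlo : π / (k + 1) < η := hηk1.1.1.trans_le hη_lo
  have hhi : η < π / (k - 1) := hη_hi.trans hηk_hi
  have hη0 : 0 < η := lt_trans (by positivity) hlo
  have hπ3 : η ≤ π / 3 := hhi.le.trans (div_le_div_of_nonneg_left pi_pos.le (by norm_num) hk3)
  obtain ⟨hA0, hA1⟩ := one_div_two_mul_cos_mem_Icc hη0.le hπ3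
  rw [hA]
  refine pos_sin_add_pow_mul_sin hA0 hA1 (Nat.sub_le_sub_right hj 2) ?_
  rcases hk.eq_or_lt with rfl | hk5
  · norm_num at hηk_lo hηk_hi hlo
    have hcos : cos ηk ^ 4 = 1 / 8 := by
      have h3 : ((4 : ℕ) : ℝ) - 1 = 3 := by norm_num
      have h2 : ((4 : ℕ) : ℝ) - 2 = 2 := by norm_num
      rw [hΦ, hA, h3, h2] at hΦk
      exact cos_pow_four_eq_of_phi_four_eq_zero ⟨by linarith [pi_pos], hηk_hi⟩ hΦk
    have hcos_lt : cos ηk < cos η :=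
      cos_lt_cos_of_nonneg_of_le_pi hη0.le (by linarith [pi_pos]) hη_hi
    have hcos_nonneg : 0 ≤ cos ηk := cos_nonneg_of_mem_Icc ⟨by linarith [pi_pos], by linarith⟩
    refine sq_one_div_two_mul_cos_lt_sin (by linarith [pi_pos]) (by linarith [pi_pos]) ?_
    exact hcos ▸ pow_lt_pow_left₀ hcos_lt hcos_nonneg (by norm_num)
  · have hk4 : (4 : ℝ) ≤ k - 1 := by
      have : (5 : ℝ) ≤ k := by exact_mod_cast hk5
      linarith
    exact one_div_two_mul_cos_pow_lt_sin hk5 hlo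
      (hhi.trans_le (div_le_div_of_nonneg_left pi_pos.le (by norm_num) hk4))
end

section
/- Let 0 < η < π/3 with 2|a|⁴ < 1 where |a| = 1/(2cos η), and let c = 1/(1-|a|⁴), a = e^{-iη}/(2cos η), z₀ = ca, w₁ = 1 - c|a|²a. Then Re z₀ ∈ (0,1), Re w₁ ∈ (0,1), and Im w₁ ∈ (0,1). -/
/-!
Since `a = 1/2 - (tan η / 2) i`, everything only depends on `Re a = 1/2`, `Im a < 0` and
`‖a‖⁴ < 1/2`, which gives `c < 2`. The one non-trivial bound is `Im w₁ = c ‖a‖² |Im a| < 1`: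
from `‖a‖² = 1/4 + (Im a)²` and AM–GM, `|Im a| ≤ ‖a‖²`, so `Im w₁ ≤ ‖a‖⁴ / (1 - ‖a‖⁴) < 1`.
-/

open Real Set

lemma exp_neg_mul_I_div_two_cos {η : ℝ} (h : cos η ≠ 0) :
    Complex.exp (-(η : ℂ) * Complex.I) / (2 * cos η) = ⟨1 / 2, -(tan η / 2)⟩ := by
  rw [div_eq_iff (by exact_mod_cast mul_ne_zero two_ne_zero h), ← Complex.ofReal_neg,
    Complex.exp_ofReal_mul_I, cos_neg, sin_neg, tan_eq_sin_div_cos]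
  apply Complex.ext <;> simp [-Complex.ofReal_cos, -Complex.ofReal_sin]
  field_simp

lemma abs_im_le_norm_sq_of_re_eq_half {a : ℂ} (hre : a.re = 1 / 2) : |a.im| ≤ ‖a‖ ^ 2 := by
  rw [← Complex.normSq_eq_norm_sq, Complex.normSq_apply, hre, ← abs_mul_abs_self a.im]
  nlinarith [sq_nonneg (|a.im| - 1 / 2)]

section
variable {a : ℂ} (hre : a.re = 1 / 2) (h4 : 2 * ‖a‖ ^ 4 < 1)
include hre h4

lemma re_ofReal_mul_mem_Ioo_of_re_eq_half :
    ((1 / (1 - ‖a‖ ^ 4) : ℝ) * a).re ∈ Ioo 0 1 := by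
  rw [Complex.re_ofReal_mul, hre]
  have hden : 0 < 1 - ‖a‖ ^ 4 := by linarith
  constructor
  · positivity
  · rw [div_mul_eq_mul_div, div_lt_one hden]
    linarith

lemma re_one_sub_mem_Ioo_of_re_eq_half :
    (1 - ((1 / (1 - ‖a‖ ^ 4) : ℝ) : ℂ) * (‖a‖ : ℂ) ^ 2 * a).re ∈ Ioo 0 1 := by
  rw [← Complex.ofReal_pow, ← Complex.ofReal_mul, Complex.sub_re, Complex.one_re,
    Complex.re_ofReal_mul, hre, div_mul_eq_mul_div, one_mul, div_mul_eq_mul_div]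
  have hden : 0 < 1 - ‖a‖ ^ 4 := by linarith
  have hnorm : 1 / 2 ≤ ‖a‖ := hre ▸ (le_abs_self _).trans (Complex.abs_re_le_norm a)
  constructor
  · rw [sub_pos, div_lt_one hden]
    nlinarith
  · simp only [sub_lt_self_iff]
    positivity

lemma im_one_sub_mem_Ioo_of_re_eq_half (him : a.im < 0) :
    (1 - ((1 / (1 - ‖a‖ ^ 4) : ℝ) : ℂ) * (‖a‖ : ℂ) ^ 2 * a).im ∈ Ioo 0 1 := by
  rw [← Complex.ofReal_pow, ← Complex.ofReal_mul, Complex.sub_im, Complex.one_im,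
    Complex.im_ofReal_mul, zero_sub, ← mul_neg, ← abs_of_neg him, div_mul_eq_mul_div, one_mul,
    div_mul_eq_mul_div]
  have hden : 0 < 1 - ‖a‖ ^ 4 := by linarith
  have hle := abs_im_le_norm_sq_of_re_eq_half hre
  constructor
  · have : 0 < |a.im| := abs_pos.mpr him.ne
    have : 0 < ‖a‖ := norm_pos_iff.mpr (by rintro rfl; simp at him)
    positivity
  · rw [div_lt_one hden]
    nlinarith

end

theorem stmt16 (η : ℝ) (hη0 : 0 < η) (hη1 : η < π / 3)
    (a : ℂ) (ha : a = Complex.exp (-(η : ℂ) * Complex.I) / (2 * Real.cos η))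
    (h4 : 2 * ‖a‖ ^ 4 < 1)
    (c : ℝ) (hc : c = 1 / (1 - ‖a‖ ^ 4))
    (z₀ : ℂ) (hz₀ : z₀ = (c : ℂ) * a)
    (w₁ : ℂ) (hw₁ : w₁ = 1 - (c : ℂ) * (‖a‖ : ℂ) ^ 2 * a) :
    z₀.re ∈ Set.Ioo (0 : ℝ) 1 ∧ w₁.re ∈ Set.Ioo (0 : ℝ) 1 ∧ w₁.im ∈ Set.Ioo (0 : ℝ) 1 := by
  have hcos : cos η ≠ 0 := (cos_pos_of_mem_Ioo ⟨by linarith [pi_pos], by linarith⟩).ne'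
  rw [exp_neg_mul_I_div_two_cos hcos] at ha
  have hre : a.re = 1 / 2 := by rw [ha]
  have him : a.im < 0 := by
    rw [ha, neg_lt_zero]
    exact half_pos (tan_pos_of_pos_of_lt_pi_div_two hη0 (by linarith))
  subst hc hz₀ hw₁
  exact ⟨re_ofReal_mul_mem_Ioo_of_re_eq_half hre h4, re_one_sub_mem_Ioo_of_re_eq_half hre h4,
    im_one_sub_mem_Ioo_of_re_eq_half hre h4 him⟩
end
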